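/- arXiv:1110.2237 — 17 statements merged into one kernel-verified Lean document; each statement's English description precedes it below -/
import Mathlib

section
/- Let n and m be integers with 0 ≤ m < n−1, and let G be a simple graph with exactly n²−m vertices. If some vertex of G has degree at least n²−n, then G does not admit two orthogonal n-colorings; i.e., any family of mutually orthogonal n-colorings of G has at most one member. -/
/-- A proper `n`-coloring of a simple graph `G`. -/
def IsProperColoring {V : Type*} (G : SimpleGraph V) (n : ℕ) (C : V → Fin n) : Prop :=
  ∀ u v, G.Adj u v → C u ≠ C v

/-- Two `n`-colorings are orthogonal if whenever two distinct vertices share a color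
in the first, they have distinct colors in the second. -/
def OrthogonalColorings {V : Type*} {n : ℕ} (C₁ C₂ : V → Fin n) : Prop :=
  ∀ u v, u ≠ v → C₁ u = C₁ v → C₂ u ≠ C₂ v

/-- If `G` has `n² − m` vertices with `0 ≤ m < n − 1` and some vertex has degree
at least `n² − n`, then any family of mutually orthogonal `n`-colorings of `G`
has at most one member. -/
theorem stmt_0 {V : Type*} [Fintype V] (G : SimpleGraph V) [DecidableRel G.Adj]
    (n m : ℕ) (hm : m + 1 < n) (hcard : Fintype.card V = n ^ 2 - m)
    (x : V) (hx : n ^ 2 - n ≤ G.degree x)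
    (k : ℕ) (C : Fin k → V → Fin n)
    (hproper : ∀ i, IsProperColoring G n (C i))
    (horth : ∀ i j, i ≠ j → OrthogonalColorings (C i) (C j)) :
    k ≤ 1 := by
  by_contra hk
  push_neg at hk
  have hn2 : 2 ≤ n := by omega
  have h01 : (⟨0, by omega⟩ : Fin k) ≠ ⟨1, by omega⟩ := by
    simp [Fin.ext_iff]
  set C₁ := C ⟨0, by omega⟩ with hC1
  set C₂ := C ⟨1, by omega⟩ with hC2
  have hp1 : IsProperColoring G n C₁ := hproper _
  have hp2 : IsProperColoring G n C₂ := hproper _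
  have ho : OrthogonalColorings C₁ C₂ := horth _ _ h01
  -- the pair map is injective
  set f : V → Fin n × Fin n := fun v => (C₁ v, C₂ v) with hf
  -- neighbors of x map into ({C₁ x}ᶜ ×ˢ {C₂ x}ᶜ)
  set S : Finset (Fin n × Fin n) := ({C₁ x}ᶜ ×ˢ {C₂ x}ᶜ) with hS
  have hmap : ∀ v ∈ G.neighborFinset x, f v ∈ S := by
    intro v hv
    rw [SimpleGraph.mem_neighborFinset] at hv
    simp only [hS, hf, Finset.mem_product, Finset.mem_compl, Finset.mem_singleton]
    exact ⟨fun h => hp1 x v hv h.symm, fun h => hp2 x v hv h.symm⟩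
  have hinj : Set.InjOn f (G.neighborFinset x) := by
    intro u _ v _ huv
    by_contra hne
    simp only [hf, Prod.mk.injEq] at huv
    exact ho u v hne huv.1 huv.2
  have hle : (G.neighborFinset x).card ≤ S.card :=
    Finset.card_le_card_of_injOn f hmap hinj
  have hScard : S.card = (n - 1) * (n - 1) := by
    simp [hS, Finset.card_product, Finset.card_compl]
  rw [← SimpleGraph.card_neighborFinset_eq_degree] at hx
  have : n ^ 2 - n ≤ (n - 1) * (n - 1) := by
    calc n ^ 2 - n ≤ (G.neighborFinset x).card := hx
    _ ≤ S.card := hle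
    _ = (n - 1) * (n - 1) := hScard
  obtain ⟨p, rfl⟩ : ∃ p, n = p + 2 := ⟨n - 2, by omega⟩
  have h1 : (p + 2) ^ 2 = p * p + 4 * p + 4 := by ring
  have h2 : (p + 2 - 1) * (p + 2 - 1) = p * p + 2 * p + 1 := by
    show (p + 1) * (p + 1) = _; ring
  omega
end

section
/- (Degree bound.) Let n and m be integers with 0 ≤ m < n−1, and let G be a simple graph with exactly n²−m vertices whose maximum vertex degree Δ satisfies Δ < n²−n. If C₁, …, C_k are mutually orthogonal n-colorings of G, then k·(n−m−1) ≤ n²−m−Δ−1 (equivalently, k ≤ ⌊(n²−m−Δ−1)/(n−m−1)⌋). -/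
/-- Degree bound: if `G` has `n² − m` vertices with `0 ≤ m < n − 1` and maximum
degree `Δ < n² − n`, then `k` mutually orthogonal `n`-colorings satisfy
`k·(n − m − 1) ≤ n² − m − Δ − 1`. -/
theorem stmt_1 {V : Type*} [Fintype V] (G : SimpleGraph V) [DecidableRel G.Adj]
    (n m : ℕ) (hm : m + 1 < n) (hcard : Fintype.card V = n ^ 2 - m)
    (hΔ : G.maxDegree < n ^ 2 - n)
    (k : ℕ) (C : Fin k → V → Fin n)
    (hproper : ∀ i, IsProperColoring G n (C i))
    (horth : ∀ i j, i ≠ j → OrthogonalColorings (C i) (C j)) :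
    (k : ℤ) * ((n : ℤ) - m - 1) ≤ (n : ℤ) ^ 2 - m - G.maxDegree - 1 := by
  classical
  have hnn : n ≤ n ^ 2 := by nlinarith
  have hDn : G.maxDegree + n ≤ n ^ 2 := by omega
  have hDn' : (G.maxDegree : ℤ) + n ≤ (n : ℤ) ^ 2 := by exact_mod_cast hDn
  have hm' : (m : ℤ) + 1 < n := by exact_mod_cast hm
  by_cases hk : k ≤ 1
  · interval_cases k
    · simp
      linarith
    · simp only [Nat.cast_one, one_mul]
      linarith
  -- main case: k ≥ 2
  have hk2 : 2 ≤ k := by omega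
  obtain ⟨p, rfl⟩ : ∃ p, n = p + 1 := ⟨n - 1, by omega⟩
  have hnt : Nontrivial (Fin k) := Fin.nontrivial_iff_two_le.mpr hk2
  have hVpos : 0 < Fintype.card V := by rw [hcard]; omega
  have : Nonempty V := Fintype.card_pos_iff.mp hVpos
  obtain ⟨v, hv⟩ := G.exists_maximal_degree_vertex
  -- the set of non-neighbors of v (excluding v)
  set S : Finset V := Finset.univ \ insert v (G.neighborFinset v) with hS
  have hins : (insert v (G.neighborFinset v)).card = G.degree v + 1 := by
    rw [Finset.card_insert_of_notMem (by simp)]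
    simp [SimpleGraph.card_neighborFinset_eq_degree]
  have hle : (insert v (G.neighborFinset v)).card ≤ Fintype.card V :=
    Finset.card_le_univ _
  have hScard : S.card + (G.degree v + 1) = Fintype.card V := by
    rw [hS, Finset.card_sdiff_of_subset (Finset.subset_univ _), hins]
    simp only [Finset.card_univ]
    omega
  -- color classes of v
  set A : Fin k → Finset V := fun i =>
    Finset.univ.filter (fun u => u ≠ v ∧ C i u = C i v) with hA
  have hAS : ∀ i, A i ⊆ S := by
    intro i u hu
    simp only [hA, Finset.mem_filter] at hu
    simp only [hS, Finset.mem_sdiff, Finset.mem_insert, Finset.mem_univ, true_and,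
      SimpleGraph.mem_neighborFinset]
    rintro (h | h)
    · exact hu.2.1 h
    · exact hproper i v u h hu.2.2.symm
  have hdisj : ∀ i ∈ (Finset.univ : Finset (Fin k)), ∀ j ∈ Finset.univ, i ≠ j →
      Disjoint (A i) (A j) := by
    intro i _ j _ hij
    rw [Finset.disjoint_left]
    intro u hui huj
    simp only [hA, Finset.mem_filter] at hui huj
    exact horth i j hij u v hui.2.1 hui.2.2 huj.2.2
  -- each A i has at least (p + 1) - m - 1 elements
  have hlow : ∀ i : Fin k, (p + 1) ≤ (A i).card + m + 1 := by
    intro i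
    obtain ⟨j, hj⟩ := exists_ne i
    -- fibers of C i
    have hfib : Fintype.card V =
        ∑ c : Fin (p + 1), (Finset.univ.filter (fun u => C i u = c)).card := by
      rw [← Finset.card_univ]
      exact Finset.card_eq_sum_card_fiberwise (fun u _ => Finset.mem_univ (C i u))
    have hfle : ∀ c : Fin (p + 1), (Finset.univ.filter (fun u => C i u = c)).card ≤ (p + 1) := by
      intro c
      have := Finset.card_le_card_of_injOn (f := C j)
        (s := Finset.univ.filter (fun u => C i u = c))
        (t := (Finset.univ : Finset (Fin (p + 1)))) (fun u _ => Finset.mem_univ _) ?_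
      · simpa using this
      · intro u hu w hw huw
        simp only [Finset.coe_filter, Set.mem_setOf_eq] at hu hw
        by_contra hne
        exact horth i j (Ne.symm hj) u w hne (hu.2.trans hw.2.symm) huw
    -- the fiber of v's color
    set c₀ := C i v with hc₀
    have hsplit : ∑ c : Fin (p + 1), (Finset.univ.filter (fun u => C i u = c)).card =
        (Finset.univ.filter (fun u => C i u = c₀)).card +
        ∑ c ∈ Finset.univ.erase c₀, (Finset.univ.filter (fun u => C i u = c)).card := by
      exact (Finset.add_sum_erase _ _ (Finset.mem_univ c₀)).symm
    have hrest : ∑ c ∈ Finset.univ.erase c₀,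
        (Finset.univ.filter (fun u => C i u = c)).card ≤ p * (p + 1) := by
      calc ∑ c ∈ Finset.univ.erase c₀, (Finset.univ.filter (fun u => C i u = c)).card
          ≤ (Finset.univ.erase c₀).card * (p + 1) :=
            Finset.sum_le_card_nsmul _ _ (p + 1) (fun c _ => hfle c)
        _ = p * (p + 1) := by
            rw [Finset.card_erase_of_mem (Finset.mem_univ c₀)]
            simp
    have hq : p * (p + 1) + (p + 1) = (p + 1) ^ 2 := by ring
    have hAi : (A i).card + 1 = (Finset.univ.filter (fun u => C i u = c₀)).card := by
      have : Finset.univ.filter (fun u => C i u = c₀) = insert v (A i) := by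
        ext u
        simp only [hA, Finset.mem_filter, Finset.mem_insert, Finset.mem_univ, true_and]
        constructor
        · intro h
          by_cases huv : u = v
          · exact Or.inl huv
          · exact Or.inr ⟨huv, h⟩
        · rintro (rfl | ⟨_, h⟩)
          · rfl
          · exact h
      rw [this, Finset.card_insert_of_notMem (by simp [hA])]
    have hfibcard : m < (p + 1) ^ 2 := by omega
    omega
  -- sum them up
  have hsum : k * ((p + 1) - m - 1) ≤ S.card := by
    calc k * ((p + 1) - m - 1) = (Finset.univ : Finset (Fin k)).card * ((p + 1) - m - 1) := by
          simp
      _ ≤ ∑ i : Fin k, (A i).card :=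
          Finset.card_nsmul_le_sum _ _ _ (fun i _ => by have := hlow i; omega)
      _ = (Finset.univ.biUnion A).card := (Finset.card_biUnion hdisj).symm
      _ ≤ S.card := Finset.card_le_card (Finset.biUnion_subset.mpr (fun i _ => hAS i))
  have hfin : k * ((p + 1) - m - 1) + (G.maxDegree + m + 1) ≤ (p + 1) ^ 2 := by
    rw [hv]
    have := hScard
    rw [hcard] at this
    omega
  have hcast : ((k * ((p + 1) - m - 1) : ℕ) : ℤ) = (k : ℤ) * (((p + 1) : ℤ) - m - 1) := by
    have hmp : m ≤ p := by omega
    push_cast [Nat.sub_sub, Nat.succ_sub_succ, Nat.cast_sub hmp]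
    ring
  have hfin' : ((k * ((p + 1) - m - 1) : ℕ) : ℤ) + ((G.maxDegree : ℤ) + m + 1) ≤ ((p + 1) : ℤ) ^ 2 := by
    exact_mod_cast hfin
  rw [hcast] at hfin'
  push_cast
  linarith
end

section
/- (Clique bound.) Let r, s, n, j be integers with 1 < r ≤ n, 1 < s ≤ n, and n < r+s. Let G be a simple graph containing a set A of s pairwise adjacent vertices (an s-clique) and a set B of r pairwise adjacent vertices (an r-clique) disjoint from A, such that every vertex of B is adjacent to at least j vertices of A. If C₁, …, C_k are mutually orthogonal n-colorings of G, then k·(r+s−n) ≤ r·(s−j). -/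
open Finset

section

variable {V α : Type*}

def sameColorPairs [DecidableEq α] (c : V → α) (B A : Finset V) : Finset (V × V) :=
  (B ×ˢ A).filter fun p => c p.1 = c p.2

def nonAdjPairs (G : SimpleGraph V) [DecidableRel G.Adj] (B A : Finset V) : Finset (V × V) :=
  (B ×ˢ A).filter fun p => ¬ G.Adj p.1 p.2

theorem card_add_card_le_card_add_card_sameColorPairs [Fintype α] [DecidableEq α]
    {c : V → α} {A B : Finset V} (hA : Set.InjOn c A) (hB : Set.InjOn c B) :
    #A + #B ≤ Fintype.card α + #(sameColorPairs c B A) := by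
  have hcommon : #(A.image c ∩ B.image c) ≤ #(sameColorPairs c B A) := by
    refine card_le_card_of_surjOn (fun p => c p.1) ?_
    intro x hx
    obtain ⟨⟨a, ha, rfl⟩, ⟨b, hb, hba⟩⟩ := by simpa only [coe_inter, Set.mem_inter_iff,
      coe_image, Set.mem_image, mem_coe] using hx
    exact ⟨(b, a), by simp [sameColorPairs, ha, hb, hba], hba⟩
  calc #A + #B = #(A.image c ∪ B.image c) + #(A.image c ∩ B.image c) := by
        rw [card_union_add_card_inter, card_image_of_injOn hA, card_image_of_injOn hB]
    _ ≤ Fintype.card α + #(sameColorPairs c B A) := add_le_add (card_le_univ _) hcommon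

theorem card_nonAdjPairs_add_mul_le (G : SimpleGraph V) [DecidableRel G.Adj] {A B : Finset V}
    {j : ℕ} (hj : ∀ b ∈ B, j ≤ #(A.filter (G.Adj b ·))) :
    #(nonAdjPairs G B A) + #B * j ≤ #B * #A := by
  have hfiber : #(nonAdjPairs G B A) = ∑ b ∈ B, #(A.filter (¬ G.Adj b ·)) := by
    simp only [nonAdjPairs, card_filter, sum_product]
  calc #(nonAdjPairs G B A) + #B * j = ∑ b ∈ B, (#(A.filter (¬ G.Adj b ·)) + j) := by
        rw [hfiber, sum_add_distrib, sum_const, smul_eq_mul, mul_comm]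
    _ ≤ ∑ _b ∈ B, #A := sum_le_sum fun b hb => by
        have := card_filter_add_card_filter_not (s := A) (G.Adj b ·)
        have := hj b hb
        omega
    _ = #B * #A := by rw [sum_const, smul_eq_mul]

variable {n : ℕ}

theorem IsProperColoring.injOn_of_isClique {G : SimpleGraph V} {C : V → Fin n}
    (hC : IsProperColoring G n C) {s : Set V} (hs : G.IsClique s) : Set.InjOn C s :=
  fun _ hu _ hv huv => by_contra fun hne => hC _ _ (hs hu hv hne) huv

theorem IsProperColoring.sameColorPairs_subset_nonAdjPairs {G : SimpleGraph V}
    [DecidableRel G.Adj] {C : V → Fin n} (hC : IsProperColoring G n C) (B A : Finset V) :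
    sameColorPairs C B A ⊆ nonAdjPairs G B A := by
  intro p hp
  simp only [sameColorPairs, nonAdjPairs, mem_filter] at hp ⊢
  exact ⟨hp.1, fun hadj => hC _ _ hadj hp.2⟩

theorem OrthogonalColorings.disjoint_sameColorPairs {C₁ C₂ : V → Fin n}
    (h : OrthogonalColorings C₁ C₂) {A B : Finset V} (hAB : Disjoint A B) :
    Disjoint (sameColorPairs C₁ B A) (sameColorPairs C₂ B A) := by
  refine disjoint_left.mpr fun p hp₁ hp₂ => ?_
  simp only [sameColorPairs, mem_filter, mem_product] at hp₁ hp₂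
  have hne : p.1 ≠ p.2 := fun heq => disjoint_left.mp hAB (heq ▸ hp₁.1.2) hp₁.1.1
  exact h _ _ hne hp₁.2 hp₂.2

theorem sum_card_sameColorPairs_le_card_nonAdjPairs {ι : Type*} [Fintype ι]
    {G : SimpleGraph V} [DecidableRel G.Adj] {C : ι → V → Fin n}
    (hproper : ∀ i, IsProperColoring G n (C i))
    (horth : ∀ i i', i ≠ i' → OrthogonalColorings (C i) (C i'))
    {A B : Finset V} (hAB : Disjoint A B) :
    ∑ i, #(sameColorPairs (C i) B A) ≤ #(nonAdjPairs G B A) := by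
  classical
  rw [← card_biUnion fun i _ i' _ hii' => (horth i i' hii').disjoint_sameColorPairs hAB]
  exact card_le_card <| biUnion_subset.mpr fun i _ =>
    (hproper i).sameColorPairs_subset_nonAdjPairs B A

end

theorem stmt_2_general {V : Type*} (G : SimpleGraph V) [DecidableRel G.Adj]
    (r s n j k : ℕ)
    (A B : Finset V) (hAcard : A.card = s) (hBcard : B.card = r)
    (hA : ∀ u ∈ A, ∀ v ∈ A, u ≠ v → G.Adj u v)
    (hB : ∀ u ∈ B, ∀ v ∈ B, u ≠ v → G.Adj u v)
    (hdisj : Disjoint A B)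
    (hj : ∀ b ∈ B, j ≤ (A.filter (fun a => G.Adj b a)).card)
    (C : Fin k → V → Fin n)
    (hproper : ∀ i, IsProperColoring G n (C i))
    (horth : ∀ i i', i ≠ i' → OrthogonalColorings (C i) (C i')) :
    (k : ℤ) * ((r : ℤ) + s - n) ≤ (r : ℤ) * ((s : ℤ) - j) := by
  have hcolor i : s + r ≤ n + #(sameColorPairs (C i) B A) := by
    simpa only [hAcard, hBcard, Fintype.card_fin] using
      card_add_card_le_card_add_card_sameColorPairs
        ((hproper i).injOn_of_isClique hA) ((hproper i).injOn_of_isClique hB)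
  have hcolors : k * (s + r) ≤ k * n + #(nonAdjPairs G B A) :=
    calc k * (s + r) = ∑ _i : Fin k, (s + r) := by simp
      _ ≤ ∑ i, (n + #(sameColorPairs (C i) B A)) := sum_le_sum fun i _ => hcolor i
      _ ≤ k * n + #(nonAdjPairs G B A) := by
        rw [sum_add_distrib, sum_const, card_univ, Fintype.card_fin, smul_eq_mul]
        exact add_le_add_right (sum_card_sameColorPairs_le_card_nonAdjPairs hproper horth hdisj) _
  have hnonAdj := card_nonAdjPairs_add_mul_le G hj
  rw [hAcard, hBcard] at hnonAdj
  have hnat : k * (r + s) + r * j ≤ k * n + r * s := by linarith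
  zify at hnat
  linarith

/-- Clique bound: if `G` contains disjoint cliques `A` (of size `s`) and `B` (of size
`r`), with `1 < r, s ≤ n < r + s`, and every vertex of `B` is adjacent to at least `j`
vertices of `A`, then `k` mutually orthogonal `n`-colorings satisfy
`k·(r + s − n) ≤ r·(s − j)`. -/
theorem stmt_2 {V : Type*} [DecidableEq V] (G : SimpleGraph V) [DecidableRel G.Adj]
    (r s n j k : ℕ) (hr : 1 < r) (hrn : r ≤ n) (hs : 1 < s) (hsn : s ≤ n)
    (hn : n < r + s)
    (A B : Finset V) (hAcard : A.card = s) (hBcard : B.card = r)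
    (hA : ∀ u ∈ A, ∀ v ∈ A, u ≠ v → G.Adj u v)
    (hB : ∀ u ∈ B, ∀ v ∈ B, u ≠ v → G.Adj u v)
    (hdisj : Disjoint A B)
    (hj : ∀ b ∈ B, j ≤ (A.filter (fun a => G.Adj b a)).card)
    (C : Fin k → V → Fin n)
    (hproper : ∀ i, IsProperColoring G n (C i))
    (horth : ∀ i i', i ≠ i' → OrthogonalColorings (C i) (C i')) :
    (k : ℤ) * ((r : ℤ) + s - n) ≤ (r : ℤ) * ((s : ℤ) - j) :=
  stmt_2_general G r s n j k A B hAcard hBcard hA hB hdisj hj C hproper horth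
end

section
/- (Edge bound.) Let G be a simple graph with v vertices and e edges, where v > n ≥ 1. Write v = q·n + r with q = ⌊v/n⌋ and 0 ≤ r < n. If C₁, …, C_k are mutually orthogonal n-colorings of G, then k·((n−r)·C(q,2) + r·C(q+1,2)) ≤ C(v,2) − e, where C(a,2) denotes the binomial coefficient a choose 2. -/
open Finset

lemma two_choose_two (m : ℕ) : (2 : ℤ) * (m.choose 2 : ℤ) = m * (m - 1) := by
  induction m with
  | zero => simp
  | succ p ih =>
    have h : (p + 1).choose 2 = p.choose 1 + p.choose 2 := Nat.choose_succ_succ p 1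
    rw [h]
    push_cast [Nat.choose_one_right] at *
    linarith

lemma mono_count {V : Type*} [Fintype V] [DecidableEq V] {n : ℕ} (f : V → Fin n) :
    ((univ.filter fun p : V × V => p.1 ≠ p.2 ∧ f p.1 = f p.2).card : ℤ)
      = (∑ c : Fin n, ((univ.filter fun u => f u = c).card : ℤ) ^ 2) - Fintype.card V := by
  classical
  set S := univ.filter fun p : V × V => f p.1 = f p.2 with hS
  have h1 : (S.filter fun p : V × V => p.1 ≠ p.2)
      = univ.filter fun p : V × V => p.1 ≠ p.2 ∧ f p.1 = f p.2 := by
    rw [hS, filter_filter]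
    apply filter_congr
    intro p _
    tauto
  have h2 : (S.filter fun p : V × V => ¬ p.1 ≠ p.2) = Finset.diag univ := by
    ext p
    simp only [hS, mem_filter, mem_univ, true_and, Finset.mem_diag, not_not]
    constructor
    · rintro ⟨-, h⟩; exact h
    · intro h; exact ⟨congrArg f h, h⟩
  have hsplit := Finset.card_filter_add_card_filter_not
    (s := S) (p := fun p : V × V => p.1 ≠ p.2)
  rw [h1, h2] at hsplit
  have hdiag : (Finset.diag (univ : Finset V)).card = Fintype.card V := by
    rw [Finset.diag_card, card_univ]
  have hScard : S.card = ∑ c : Fin n, ((univ.filter fun u => f u = c).card) ^ 2 := by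
    rw [Finset.card_eq_sum_card_fiberwise (f := fun p : V × V => f p.1) (t := univ)
      (fun x _ => mem_univ _)]
    apply Finset.sum_congr rfl
    intro c _
    have : (S.filter fun p : V × V => f p.1 = c)
        = (univ.filter fun u => f u = c) ×ˢ (univ.filter fun u => f u = c) := by
      ext p
      simp only [hS, mem_filter, mem_univ, true_and, Finset.mem_product]
      constructor
      · rintro ⟨h1, h2⟩; exact ⟨h2, h2 ▸ h1.symm⟩
      · rintro ⟨h1, h2⟩; exact ⟨h1.trans h2.symm, h1⟩
    rw [this, Finset.card_product, sq]
  have : (univ.filter fun p : V × V => p.1 ≠ p.2 ∧ f p.1 = f p.2).card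
      = (∑ c : Fin n, ((univ.filter fun u => f u = c).card) ^ 2) - Fintype.card V := by
    omega
  rw [this]
  have hle : Fintype.card V ≤ ∑ c : Fin n, ((univ.filter fun u => f u = c).card) ^ 2 := by omega
  push_cast [Nat.cast_sub hle]
  ring

lemma int_consec_nonneg (t : ℤ) : 0 ≤ t * (t - 1) := by
  rcases le_or_gt t 0 with h | h
  · have h2 := mul_nonneg (neg_nonneg.mpr h) (by linarith : (0 : ℤ) ≤ 1 - t)
    nlinarith
  · have h1 : 1 ≤ t := h
    nlinarith

/-- Edge bound: let `G` have `v` vertices and `e` edges with `v > n ≥ 1`, and write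
`v = q·n + r` with `q = ⌊v/n⌋` and `0 ≤ r < n`. Then `k` mutually orthogonal
`n`-colorings satisfy `k·((n − r)·C(q,2) + r·C(q+1,2)) ≤ C(v,2) − e`. -/
theorem stmt_4 {V : Type*} [Fintype V] (G : SimpleGraph V) [Fintype G.edgeSet]
    (v e n q r k : ℕ) (hv : v = Fintype.card V) (he : e = G.edgeFinset.card)
    (hn : 1 ≤ n) (hvn : v > n) (hq : q = v / n) (hr : r = v % n)
    (C : Fin k → V → Fin n)
    (hproper : ∀ i, IsProperColoring G n (C i))
    (horth : ∀ i j, i ≠ j → OrthogonalColorings (C i) (C j)) :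
    (k : ℤ) * (((n : ℤ) - r) * (Nat.choose q 2 : ℤ) + (r : ℤ) * (Nat.choose (q + 1) 2 : ℤ))
      ≤ (Nat.choose v 2 : ℤ) - e := by
  classical
  -- the sets of monochromatic ordered pairs
  set N : Fin k → Finset (V × V) :=
    fun i => univ.filter fun p : V × V => p.1 ≠ p.2 ∧ C i p.1 = C i p.2 with hN
  set B : Finset (V × V) := univ.filter fun p : V × V => p.1 ≠ p.2 ∧ ¬ G.Adj p.1 p.2 with hB
  -- each N i is contained in B
  have hsub : ∀ i, N i ⊆ B := by
    intro i p hp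
    rw [hN, mem_filter] at hp
    rw [hB, mem_filter]
    refine ⟨mem_univ _, hp.2.1, fun hadj => hproper i p.1 p.2 hadj hp.2.2⟩
  -- the N i are pairwise disjoint
  have hdisj : ∀ i ∈ (univ : Finset (Fin k)), ∀ j ∈ (univ : Finset (Fin k)), i ≠ j →
      Disjoint (N i) (N j) := by
    intro i _ j _ hij
    rw [Finset.disjoint_left]
    intro p hpi hpj
    rw [hN, mem_filter] at hpi hpj
    exact horth i j hij p.1 p.2 hpi.2.1 hpi.2.2 hpj.2.2
  have hsum : ∑ i : Fin k, (N i).card ≤ B.card := by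
    rw [← Finset.card_biUnion hdisj]
    exact Finset.card_le_card (Finset.biUnion_subset.mpr fun i _ => hsub i)
  -- compute the cardinality of B
  have htop : 2 * (v.choose 2) = (univ.filter fun p : V × V => p.1 ≠ p.2).card := by
    rw [hv, ← SimpleGraph.card_edgeFinset_top_eq_card_choose_two,
      SimpleGraph.two_mul_card_edgeFinset]
    first
    | (congr 1
       ext ⟨a, b⟩
       simp [SimpleGraph.top_adj])
    | congr 1
    | rfl
  have hadjcard : 2 * e = (univ.filter fun p : V × V => p.1 ≠ p.2 ∧ G.Adj p.1 p.2).card := by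
    have h2m := SimpleGraph.two_mul_card_edgeFinset (G := G)
    have hE : (@SimpleGraph.edgeFinset V G G.fintypeEdgeSet) = G.edgeFinset := by
      congr!
    rw [hE] at h2m
    rw [he, h2m]
    congr 1
    ext ⟨a, b⟩
    simp only [mem_filter, mem_univ, true_and]
    exact ⟨fun h => ⟨h.ne, h⟩, fun h => h.2⟩
  have hBsplit : (univ.filter fun p : V × V => p.1 ≠ p.2).card
      = (univ.filter fun p : V × V => p.1 ≠ p.2 ∧ G.Adj p.1 p.2).card + B.card := by
    rw [hB]
    rw [← Finset.card_filter_add_card_filter_not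
      (s := univ.filter fun p : V × V => p.1 ≠ p.2) (p := fun p : V × V => G.Adj p.1 p.2),
      filter_filter, filter_filter]
  have hBcard : (B.card : ℤ) = 2 * (v.choose 2 : ℤ) - 2 * e := by
    have : 2 * (v.choose 2) = 2 * e + B.card := by rw [htop, hBsplit, hadjcard]
    have := congrArg (fun m : ℕ => (m : ℤ)) this
    push_cast at this
    linarith
  -- lower bound for each N i
  have hfib : ∀ i : Fin k, (v : ℤ) = ∑ c : Fin n, ((univ.filter fun u => C i u = c).card : ℤ) := by
    intro i
    rw [hv, ← card_univ, Finset.card_eq_sum_card_fiberwise (f := C i) (t := univ)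
      (fun x _ => mem_univ _)]
    push_cast
    rfl
  have hlower : ∀ i : Fin k,
      2 * (((n : ℤ) - r) * (q.choose 2 : ℤ) + (r : ℤ) * ((q + 1).choose 2 : ℤ))
        ≤ ((N i).card : ℤ) := by
    intro i
    rw [hN]
    rw [mono_count (C i)]
    have hkey : ∀ c : Fin n, 2 * (q : ℤ) * ((univ.filter fun u => C i u = c).card : ℤ)
        - (q : ℤ) * ((q : ℤ) + 1) + ((univ.filter fun u => C i u = c).card : ℤ)
        ≤ ((univ.filter fun u => C i u = c).card : ℤ) ^ 2 := by
      intro c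
      set s : ℤ := ((univ.filter fun u => C i u = c).card : ℤ)
      have := int_consec_nonneg (s - q)
      nlinarith [this]
    have hsum2 : ∑ c : Fin n, (2 * (q : ℤ) * ((univ.filter fun u => C i u = c).card : ℤ)
        - (q : ℤ) * ((q : ℤ) + 1) + ((univ.filter fun u => C i u = c).card : ℤ))
        ≤ ∑ c : Fin n, ((univ.filter fun u => C i u = c).card : ℤ) ^ 2 :=
      Finset.sum_le_sum fun c _ => hkey c
    have hexp : ∑ c : Fin n, (2 * (q : ℤ) * ((univ.filter fun u => C i u = c).card : ℤ)
        - (q : ℤ) * ((q : ℤ) + 1) + ((univ.filter fun u => C i u = c).card : ℤ))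
        = 2 * (q : ℤ) * v - (n : ℤ) * ((q : ℤ) * ((q : ℤ) + 1)) + v := by
      rw [Finset.sum_add_distrib, Finset.sum_sub_distrib, ← Finset.mul_sum, ← hfib i,
        Finset.sum_const, card_univ, Fintype.card_fin, nsmul_eq_mul]
    rw [hexp] at hsum2
    -- arithmetic: 2*((n-r)*C(q,2) + r*C(q+1,2)) = 2*q*v - n*q*(q+1) + v - v
    have hc1 := two_choose_two q
    have hc2 := two_choose_two (q + 1)
    have hveq : (v : ℤ) = q * n + r := by
      have : v = q * n + r := by
        rw [hq, hr, Nat.mul_comm]; exact (Nat.div_add_mod v n).symm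
      exact_mod_cast this
    push_cast at hc2
    have hV' : (v : ℤ) ≤ Fintype.card V := by rw [hv]
    nlinarith [hsum2]
  -- assemble
  have hfinal : (k : ℤ) * (2 * (((n : ℤ) - r) * (q.choose 2 : ℤ)
      + (r : ℤ) * ((q + 1).choose 2 : ℤ))) ≤ (B.card : ℤ) := by
    calc (k : ℤ) * (2 * (((n : ℤ) - r) * (q.choose 2 : ℤ) + (r : ℤ) * ((q + 1).choose 2 : ℤ)))
        = ∑ _i : Fin k, 2 * (((n : ℤ) - r) * (q.choose 2 : ℤ)
            + (r : ℤ) * ((q + 1).choose 2 : ℤ)) := by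
          rw [Finset.sum_const, card_univ, Fintype.card_fin, nsmul_eq_mul]
      _ ≤ ∑ i : Fin k, ((N i).card : ℤ) := Finset.sum_le_sum fun i _ => hlower i
      _ ≤ (B.card : ℤ) := by exact_mod_cast hsum
  rw [hBcard] at hfinal
  linarith
end

section
/- Let n ≥ 2. Any family of pairwise orthogonal equi-n squares of order n has at most n+1 members: if f₁, …, f_k are equi-n squares such that for all i ≠ j and all distinct cells c ≠ c', f_i(c) = f_i(c') implies f_j(c) ≠ f_j(c'), then k ≤ n+1. -/
/-- An equi-`n` square: every symbol occurs in exactly `n` cells. -/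
def IsEquiNSquare (n : ℕ) (f : Fin n × Fin n → Fin n) : Prop :=
  ∀ a : Fin n, (Finset.univ.filter (fun c => f c = a)).card = n

/-- Two squares are orthogonal if whenever two distinct cells share a symbol in one,
they have distinct symbols in the other. -/
def OrthogonalSquares {n : ℕ} (f g : Fin n × Fin n → Fin n) : Prop :=
  ∀ c c' : Fin n × Fin n, c ≠ c' → f c = f c' → g c ≠ g c'

/-!
Count the ordered pairs of distinct cells that carry the same symbol. An equi-`n` square has
`n · n(n - 1)` of them; orthogonality makes these sets disjoint for different squares, and all of
them lie among the `n²(n² - 1)` ordered pairs of distinct cells. Hence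
`k · n²(n - 1) ≤ n²(n - 1)(n + 1)`, and `n ≥ 2` allows cancelling `n²(n - 1)`.
-/

open Finset

section CollisionPairs

variable {α β : Type*} [Fintype α] [DecidableEq β]

def collisionPairs (g : α → β) : Finset (α × α) :=
  univ.offDiag.filter fun p => g p.1 = g p.2

theorem mem_collisionPairs {g : α → β} {p : α × α} :
    p ∈ collisionPairs g ↔ p.1 ≠ p.2 ∧ g p.1 = g p.2 := by
  simp [collisionPairs]

theorem card_collisionPairs [Fintype β] (g : α → β) {m : ℕ}
    (hg : ∀ b, #{a | g a = b} = m) :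
    #(collisionPairs g) = Fintype.card β * (m * m - m) := by
  have hfiber : ∀ b,
      {p ∈ collisionPairs g | g p.1 = b} = ({a | g a = b} : Finset α).offDiag := by
    intro b
    ext p
    simp only [mem_filter, mem_collisionPairs, mem_offDiag, mem_univ, true_and]
    constructor
    · rintro ⟨⟨hne, heq⟩, rfl⟩; exact ⟨rfl, heq.symm, hne⟩
    · rintro ⟨rfl, heq, hne⟩; exact ⟨⟨hne, heq.symm⟩, rfl⟩
  rw [card_eq_sum_card_fiberwise (f := fun p => g p.1) (t := univ) (fun _ _ => mem_univ _)]
  simp only [hfiber, offDiag_card, hg, sum_const, card_univ, smul_eq_mul]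

theorem sum_card_collisionPairs_le {ι : Type*} [Fintype ι] (g : ι → α → β)
    (hg : Pairwise fun i j => Disjoint (collisionPairs (g i)) (collisionPairs (g j))) :
    ∑ i, #(collisionPairs (g i)) ≤ Fintype.card α * Fintype.card α - Fintype.card α := by
  classical
  calc ∑ i, #(collisionPairs (g i))
      = #(univ.biUnion fun i => collisionPairs (g i)) :=
        (card_biUnion fun i _ j _ hij => hg hij).symm
    _ ≤ #(univ : Finset α).offDiag :=
        card_le_card <| biUnion_subset.mpr fun i _ => filter_subset _ _
    _ = _ := by rw [offDiag_card, card_univ]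

end CollisionPairs

theorem OrthogonalSquares.disjoint_collisionPairs {n : ℕ} {f g : Fin n × Fin n → Fin n}
    (h : OrthogonalSquares f g) : Disjoint (collisionPairs f) (collisionPairs g) :=
  disjoint_left.mpr fun _ hf hg =>
    h _ _ (mem_collisionPairs.mp hf).1 (mem_collisionPairs.mp hf).2 (mem_collisionPairs.mp hg).2

theorem IsEquiNSquare.card_collisionPairs {n : ℕ} {f : Fin n × Fin n → Fin n}
    (hf : IsEquiNSquare n f) : #(collisionPairs f) = n * (n * n - n) := by
  rw [_root_.card_collisionPairs f hf, Fintype.card_fin]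

/-- For `n ≥ 2`, any family of pairwise orthogonal equi-`n` squares of order `n`
has at most `n + 1` members. -/
theorem stmt_5 (n k : ℕ) (hn : 2 ≤ n) (f : Fin k → Fin n × Fin n → Fin n)
    (hequi : ∀ i, IsEquiNSquare n (f i))
    (horth : ∀ i j, i ≠ j → OrthogonalSquares (f i) (f j)) :
    k ≤ n + 1 := by
  have hsum := sum_card_collisionPairs_le f fun i j hij => (horth i j hij).disjoint_collisionPairs
  simp only [fun i => (hequi i).card_collisionPairs, sum_const, card_univ, Fintype.card_fin,
    Fintype.card_prod, smul_eq_mul] at hsum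
  have hsq : n < n * n := Nat.lt_mul_self_iff.mpr hn
  have hbound : n * n * (n * n) - n * n = (n + 1) * (n * (n * n - n)) := by
    zify [hsq.le, Nat.le_mul_self (n * n)]
    ring
  rw [hbound] at hsum
  exact Nat.le_of_mul_le_mul_right hsum (Nat.mul_pos (by omega) (Nat.sub_pos_of_lt hsq))
end

section
/- Let n ≥ 2. Any family of pairwise orthogonal row latin squares of order n has at most n members: if f₁, …, f_k are row latin squares of order n such that for all i ≠ j and all distinct cells c ≠ c', f_i(c) = f_i(c') implies f_j(c) ≠ f_j(c'), then k ≤ n. -/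
/-- A row latin square of order `n`: each symbol occurs exactly once in each row. -/
def IsRowLatinSquare (n : ℕ) (f : Fin n × Fin n → Fin n) : Prop :=
  ∀ i : Fin n, Function.Injective (fun j => f (i, j))

/-- For `n ≥ 2`, any family of pairwise orthogonal row latin squares of order `n`
has at most `n` members. -/
theorem stmt_6 (n k : ℕ) (hn : 2 ≤ n) (f : Fin k → Fin n × Fin n → Fin n)
    (hrow : ∀ i, IsRowLatinSquare n (f i))
    (horth : ∀ i j, i ≠ j → OrthogonalSquares (f i) (f j)) :
    k ≤ n := by
  have h0 : (0 : ℕ) < n := by omega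
  have h1 : (1 : ℕ) < n := by omega
  set r0 : Fin n := ⟨0, h0⟩
  set r1 : Fin n := ⟨1, h1⟩
  have key : ∀ i : Fin k, ∃ j : Fin n, f i (r0, j) = f i (r1, r0) := by
    intro i
    exact (Finite.injective_iff_surjective.mp (hrow i r0)) _
  choose φ hφ using key
  have hinj : Function.Injective φ := by
    intro i i' h
    by_contra hne
    have hcells : (r0, φ i) ≠ ((r1, r0) : Fin n × Fin n) := by
      intro hc
      have : r0 = r1 := congrArg Prod.fst hc
      simp [r0, r1, Fin.ext_iff] at this
    exact horth i i' hne (r0, φ i) (r1, r0) hcells (hφ i) (h ▸ hφ i')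
  simpa using Fintype.card_le_of_injective φ hinj
end

section
/- Let n ≥ 2. Any family of mutually orthogonal latin squares of order n has at most n−1 members: if L₁, …, L_k are latin squares of order n that are pairwise orthogonal, then k ≤ n−1. -/
/-- A latin square of order `n`: each row map and each column map is injective. -/
def IsLatinSquare (n : ℕ) (L : Fin n × Fin n → Fin n) : Prop :=
  (∀ i : Fin n, Function.Injective (fun j => L (i, j))) ∧
  (∀ j : Fin n, Function.Injective (fun i => L (i, j)))

/-- Two latin squares are orthogonal if the superimposed pair map is injective. -/
def OrthogonalLatinSquares {n : ℕ} (L₁ L₂ : Fin n × Fin n → Fin n) : Prop :=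
  Function.Injective (fun c => (L₁ c, L₂ c))

/-- For `n ≥ 2`, any family of mutually orthogonal latin squares of order `n`
has at most `n − 1` members. -/
theorem stmt_7 (n k : ℕ) (hn : 2 ≤ n) (L : Fin k → Fin n × Fin n → Fin n)
    (hlatin : ∀ i, IsLatinSquare n (L i))
    (horth : ∀ i j, i ≠ j → OrthogonalLatinSquares (L i) (L j)) :
    k ≤ n - 1 := by
  have hn1 : 1 < n := hn
  -- row-0 permutation of each square
  have hrow0 : ∀ a, Function.Bijective (fun j => L a (⟨0, by omega⟩, j)) := fun a =>
    (Finite.injective_iff_bijective).mp ((hlatin a).1 _)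
  let σ : Fin k → Fin n ≃ Fin n := fun a => Equiv.ofBijective _ (hrow0 a)
  -- normalized squares
  let M : Fin k → Fin n × Fin n → Fin n := fun a c => (σ a).symm (L a c)
  have hM0 : ∀ a j, M a (⟨0, by omega⟩, j) = j := fun a j => (σ a).symm_apply_apply j
  have hMcol : ∀ a j, Function.Injective (fun i => M a (i, j)) := fun a j =>
    fun x y h => (hlatin a).2 j ((σ a).symm.injective h)
  have hMorth : ∀ a b, a ≠ b → Function.Injective (fun c => (M a c, M b c)) := by
    intro a b hab c d h
    simp only [Prod.mk.injEq] at h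
    exact horth a b hab (show (L a c, L b c) = (L a d, L b d) by
      simp only [Prod.mk.injEq]
      exact ⟨(σ a).symm.injective h.1, (σ b).symm.injective h.2⟩)
  set z : Fin n := ⟨0, by omega⟩ with hz
  set o : Fin n := ⟨1, by omega⟩ with ho
  let g : Fin k → {x : Fin n // x ≠ z} := fun a =>
    ⟨M a (o, z), by
      intro h
      have h0 : M a (z, z) = z := hM0 a z
      have := hMcol a z (show M a (o, z) = M a (z, z) by rw [h, h0])
      exact absurd this (by simp [ho, hz, Fin.ext_iff])⟩
  have hginj : Function.Injective g := by
    intro a b h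
    by_contra hab
    have hs : M a (o, z) = M b (o, z) := congrArg Subtype.val h
    set s := M a (o, z) with hsdef
    have h1 : (M a (o, z), M b (o, z)) = (M a (z, s), M b (z, s)) := by
      rw [hM0, hM0, ← hs, ← hsdef]
    have := hMorth a b hab h1
    have : (o : Fin n) = z := (Prod.ext_iff.mp this).1
    exact absurd this (by simp [ho, hz, Fin.ext_iff])
  have := Fintype.card_le_of_injective g hginj
  have hcard : Fintype.card {x : Fin n // x ≠ z} = n - 1 := by
    simp [Fintype.card_subtype_compl]
  simpa [hcard] using this
end

section
/- Let n ≥ 2. Any family of mutually orthogonal single diagonal latin squares of order n has at most n−2 members: if L₁, …, L_k are single diagonal latin squares of order n that are pairwise orthogonal, then k ≤ n−2. -/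
/-- A single diagonal latin square: a latin square whose main diagonal entries are
distinct. -/
def IsSingleDiagonalLatinSquare (n : ℕ) (L : Fin n × Fin n → Fin n) : Prop :=
  IsLatinSquare n L ∧ Function.Injective (fun i : Fin n => L (i, i))

/-- For `n ≥ 2`, any family of mutually orthogonal single diagonal latin squares of
order `n` has at most `n − 2` members. -/
theorem stmt_8 (n k : ℕ) (hn : 2 ≤ n) (L : Fin k → Fin n × Fin n → Fin n)
    (hsd : ∀ i, IsSingleDiagonalLatinSquare n (L i))
    (horth : ∀ i j, i ≠ j → OrthogonalLatinSquares (L i) (L j)) :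
    k ≤ n - 2 := by
  have hz0 : (0 : ℕ) < n := by omega
  have hz1 : (1 : ℕ) < n := by omega
  set z0 : Fin n := ⟨0, hz0⟩ with hz0def
  set z1 : Fin n := ⟨1, hz1⟩ with hz1def
  have hz : z0 ≠ z1 := by simp [hz0def, hz1def, Fin.ext_iff]
  have hd : ∀ i, Function.Bijective (fun j : Fin n => L i (j, j)) :=
    fun i => Finite.injective_iff_bijective.mp (hsd i).2
  let e : Fin k → (Fin n ≃ Fin n) := fun i => Equiv.ofBijective _ (hd i)
  let M : Fin k → Fin n × Fin n → Fin n := fun i c => (e i).symm (L i c)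
  have hMdiag : ∀ i j, M i (j, j) = j := fun i j => (e i).symm_apply_apply j
  have hMrow : ∀ i r, Function.Injective (fun j => M i (r, j)) :=
    fun i r => (e i).symm.injective.comp ((hsd i).1.1 r)
  have hMcol : ∀ i c, Function.Injective (fun r => M i (r, c)) :=
    fun i c => (e i).symm.injective.comp ((hsd i).1.2 c)
  set f : Fin k → Fin n := fun i => M i (z0, z1) with hfdef
  have hf0 : ∀ i, f i ≠ z0 := by
    intro i h
    have h' : (fun j => M i (z0, j)) z1 = (fun j => M i (z0, j)) z0 := by
      simpa [hMdiag i z0] using h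
    exact hz (hMrow i z0 h').symm
  have hf1 : ∀ i, f i ≠ z1 := by
    intro i h
    have h' : (fun r => M i (r, z1)) z0 = (fun r => M i (r, z1)) z1 := by
      simpa [hMdiag i z1] using h
    exact hz (hMcol i z1 h')
  have hfinj : Function.Injective f := by
    intro i j hij
    by_contra hne
    set c := f i with hc
    have hLi : L i (z0, z1) = e i c := by
      have : (e i) ((e i).symm (L i (z0, z1))) = e i c := by
        exact congrArg (e i) hc.symm
      simpa using this
    have hLj : L j (z0, z1) = e j c := by
      have : (e j) ((e j).symm (L j (z0, z1))) = e j c := by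
        exact congrArg (e j) (hc.trans hij).symm
      simpa using this
    have hLic : L i (c, c) = e i c := rfl
    have hLjc : L j (c, c) = e j c := rfl
    have key : (fun x => (L i x, L j x)) (z0, z1) = (fun x => (L i x, L j x)) (c, c) := by
      simp only [hLi, hLj, hLic, hLjc]
    have := horth i j hne key
    have h0 : z0 = c := congrArg Prod.fst this
    have h1 : z1 = c := congrArg Prod.snd this
    exact hz (h0.trans h1.symm)
  have hsub : Finset.univ.image f ⊆ (Finset.univ \ {z0, z1}) := by
    intro x hx
    simp only [Finset.mem_image, Finset.mem_univ, true_and] at hx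
    obtain ⟨i, rfl⟩ := hx
    simp only [Finset.mem_sdiff, Finset.mem_univ, true_and, Finset.mem_insert,
      Finset.mem_singleton]
    push_neg
    exact ⟨hf0 i, hf1 i⟩
  have hcard := Finset.card_le_card hsub
  rw [Finset.card_image_of_injective _ hfinj, Finset.card_univ,
    Finset.card_sdiff_of_subset (Finset.subset_univ _), Finset.card_univ] at hcard
  have h2 : ({z0, z1} : Finset (Fin n)).card = 2 := by
    rw [Finset.card_insert_of_notMem (by simpa using hz), Finset.card_singleton]
  rw [h2] at hcard
  simpa using hcard
end

section
/- Let n be an odd integer with n > 3. Any family of mutually orthogonal double diagonal latin squares of order n has at most n−3 members: if L₁, …, L_k are double diagonal latin squares of order n that are pairwise orthogonal, then k ≤ n−3. -/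
/-- A double diagonal latin square: a latin square whose main diagonal entries are
distinct and whose back diagonal entries (`L (i, n−1−i)`) are distinct. -/
def IsDoubleDiagonalLatinSquare (n : ℕ) (L : Fin n × Fin n → Fin n) : Prop :=
  IsLatinSquare n L ∧ Function.Injective (fun i : Fin n => L (i, i)) ∧
    Function.Injective (fun i : Fin n => L (i, i.rev))

/-!
The main diagonal of each square `L m` is a permutation of the symbols, so the symbol in the corner
cell `(0, n-1)` also sits on the diagonal, at some `(f m, f m)`. Orthogonality makes `f` injective:
two squares with `f m = f m' = v` would show the same pair of symbols at `(0, n-1)` and `(v, v)`.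
The row and the column of the corner exclude `f m = 0` and `f m = n-1`, and the back diagonal
through the corner excludes the centre `(n-1)/2`, which lies on both diagonals. So `f` maps the
family injectively into `n - 3` values.
-/

open Function

theorem IsLatinSquare.ne_row_of_diag_eq {n : ℕ} {L : Fin n × Fin n → Fin n}
    (hL : IsLatinSquare n L) {v i j : Fin n} (hij : i ≠ j) (h : L (v, v) = L (i, j)) :
    v ≠ i := by
  rintro rfl
  exact hij (hL.1 v h)

theorem IsLatinSquare.ne_col_of_diag_eq {n : ℕ} {L : Fin n × Fin n → Fin n}
    (hL : IsLatinSquare n L) {v i j : Fin n} (hij : i ≠ j) (h : L (v, v) = L (i, j)) :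
    v ≠ j := by
  rintro rfl
  exact hij (hL.2 v h).symm

theorem IsDoubleDiagonalLatinSquare.eq_of_diag_eq_backDiag {n : ℕ}
    {L : Fin n × Fin n → Fin n} (hL : IsDoubleDiagonalLatinSquare n L) {v i : Fin n}
    (hv : v.rev = v) (h : L (v, v) = L (i, i.rev)) : v = i := by
  refine hL.2.2 (?_ : L (v, v.rev) = L (i, i.rev))
  rwa [hv]

theorem injective_of_diag_eq {n k : ℕ} {L : Fin k → Fin n × Fin n → Fin n}
    (horth : ∀ i j, i ≠ j → OrthogonalLatinSquares (L i) (L j))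
    {c : Fin n × Fin n} (hc : c.1 ≠ c.2) {f : Fin k → Fin n}
    (hf : ∀ m, L m (f m, f m) = L m c) : Injective f := by
  intro m m' hmm'
  by_contra hne
  have hcell : (f m, f m) = c := horth m m' hne <| by
    simp only [Prod.mk.injEq]
    exact ⟨hf m, hmm' ▸ hf m'⟩
  exact hc (hcell ▸ rfl)

theorem Fintype.card_le_card_sub_of_injective {α β : Type*} [Fintype α] [Fintype β]
    [DecidableEq β] {f : α → β} (hf : Injective f) {s : Finset β} (hs : ∀ a, f a ∉ s) :
    Fintype.card α ≤ Fintype.card β - s.card := by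
  rw [← Finset.card_compl, ← Finset.card_univ]
  exact Finset.card_le_card_of_injOn f (fun a _ => Finset.mem_compl.mpr (hs a)) hf.injOn

/-- For odd `n > 3`, any family of mutually orthogonal double diagonal latin squares
of order `n` has at most `n − 3` members. -/
theorem stmt_9 (n k : ℕ) (hodd : Odd n) (hn : 3 < n)
    (L : Fin k → Fin n × Fin n → Fin n)
    (hdd : ∀ i, IsDoubleDiagonalLatinSquare n (L i))
    (horth : ∀ i j, i ≠ j → OrthogonalLatinSquares (L i) (L j)) :
    k ≤ n - 3 := by
  obtain ⟨t, rfl⟩ := hodd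
  let centre : Fin (2 * t + 1) := ⟨t, by omega⟩
  have hcentre : centre.rev = centre := Fin.ext (by simp only [Fin.val_rev, centre]; omega)
  have h0_last : (0 : Fin (2 * t + 1)) ≠ Fin.last _ := by simp [Fin.ext_iff]; omega
  have h0_centre : (0 : Fin (2 * t + 1)) ≠ centre := by simp [Fin.ext_iff, centre]; omega
  have hlast_centre : Fin.last (2 * t) ≠ centre := by simp [Fin.ext_iff, centre]; omega
  choose f hf using fun m =>
    Finite.surjective_of_injective (hdd m).2.1 (L m (0, Fin.last _))
  have hf_avoid : ∀ m, f m ∉ ({0, Fin.last _, centre} : Finset (Fin (2 * t + 1))) := by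
    intro m
    have hback : f m ≠ centre := fun h =>
      h0_centre ((hdd m).eq_of_diag_eq_backDiag (i := 0) (h ▸ hcentre)
        (by rw [Fin.rev_zero]; exact hf m) ▸ h)
    simp only [Finset.mem_insert, Finset.mem_singleton, not_or]
    exact ⟨(hdd m).1.ne_row_of_diag_eq h0_last (hf m),
      (hdd m).1.ne_col_of_diag_eq h0_last (hf m), hback⟩
  have hthree : ({0, Fin.last _, centre} : Finset (Fin (2 * t + 1))).card = 3 :=
    Finset.card_eq_three.mpr ⟨_, _, _, h0_last, h0_centre, hlast_centre, rfl⟩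
  simpa [hthree] using Fintype.card_le_card_sub_of_injective
    (injective_of_diag_eq horth h0_last hf) hf_avoid
end

section
/- Let S₁, …, S_n be a partition of the cells of an n×n array (the set Fin n × Fin n) into n regions each of size n. Suppose some region S_i intersects some row (or some column) in exactly j cells, where j < n. Then any family of mutually orthogonal gerechte designs for this partition has at most n−j members: if L₁, …, L_k are gerechte designs for S₁, …, S_n that are pairwise orthogonal, then k ≤ n−j. -/
/-- A gerechte design for a partition `S` of the `n × n` array into `n` regions of
size `n`: each symbol occurs exactly once in each row, column, and region. -/
def IsGerechteDesign (n : ℕ) (S : Fin n → Finset (Fin n × Fin n))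
    (L : Fin n × Fin n → Fin n) : Prop :=
  (∀ a : Fin n, Function.Injective (fun b => L (a, b))) ∧
  (∀ b : Fin n, Function.Injective (fun a => L (a, b))) ∧
  (∀ i : Fin n, Set.InjOn L (S i : Set (Fin n × Fin n)))

/-- Two designs are orthogonal if the superimposed pair map is injective. -/
def OrthogonalDesigns {n : ℕ} (L₁ L₂ : Fin n × Fin n → Fin n) : Prop :=
  Function.Injective (fun c => (L₁ c, L₂ c))

lemma aux_row (n j k : ℕ) (T : Finset (Fin n × Fin n)) (hsize : T.card = n)
    (hj : j < n) (a : Fin n)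
    (hm : (T.filter (fun c => c.1 = a)).card = j)
    (L : Fin k → Fin n × Fin n → Fin n)
    (hrow : ∀ t, ∀ a : Fin n, Function.Injective (fun b => L t (a, b)))
    (hreg : ∀ t, Set.InjOn (L t) (T : Set (Fin n × Fin n)))
    (horth : ∀ t t', t ≠ t' → OrthogonalDesigns (L t) (L t')) :
    k ≤ n - j := by
  -- find b with (a,b) ∉ T
  have hb : ∃ b : Fin n, (a, b) ∉ T := by
    by_contra h
    push_neg at h
    have hsub : (Finset.univ.image (fun b : Fin n => (a, b))) ⊆
        T.filter (fun c => c.1 = a) := by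
      intro c hc
      simp only [Finset.mem_image, Finset.mem_univ, true_and] at hc
      obtain ⟨b, rfl⟩ := hc
      simp [h b]
    have hcard : (Finset.univ.image (fun b : Fin n => (a, b))).card = n := by
      rw [Finset.card_image_of_injective _ (fun x y hxy => by
        simpa using congrArg Prod.snd hxy)]
      simp
    have := Finset.card_le_card hsub
    omega
  obtain ⟨b, hab⟩ := hb
  -- for each t, find d ∈ T with L t d = L t (a,b)
  have hex : ∀ t, ∃ d ∈ T, L t d = L t (a, b) := by
    intro t
    have himg : (T.image (L t)).card = n := by
      rw [Finset.card_image_of_injOn (hreg t)]; exact hsize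
    have : T.image (L t) = Finset.univ := by
      apply Finset.eq_univ_of_card
      simp [himg]
    have hmem : L t (a, b) ∈ T.image (L t) := by rw [this]; exact Finset.mem_univ _
    simpa [Finset.mem_image] using hmem
  choose d hd1 hd2 using hex
  -- d t is off the row a
  have hda : ∀ t, (d t).1 ≠ a := by
    intro t heq
    have : L t (a, (d t).2) = L t (a, b) := by
      rw [← hd2 t]; congr 1
      exact Prod.ext heq.symm rfl
    have hb2 : (d t).2 = b := hrow t a this
    have : d t = (a, b) := Prod.ext heq hb2
    exact hab (this ▸ hd1 t)
  -- d is injective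
  have hdinj : Set.InjOn d (Finset.univ : Finset (Fin k)) := by
    intro t _ t' _ heq
    by_contra hne
    have := horth t t' hne
    have hdt : d t = (a, b) := this (by
      rw [Prod.mk.injEq]
      exact ⟨hd2 t, by rw [heq]; exact hd2 t'⟩)
    exact hab (hdt ▸ hd1 t)
  have hmap : ∀ t ∈ (Finset.univ : Finset (Fin k)),
      d t ∈ T.filter (fun c => ¬ c.1 = a) := by
    intro t _
    simp [Finset.mem_filter, hd1 t, hda t]
  have hle := Finset.card_le_card_of_injOn d hmap hdinj
  have hsplit := Finset.card_filter_add_card_filter_not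
    (s := T) (p := fun c => c.1 = a)
  simp only [Finset.card_univ, Fintype.card_fin] at hle
  omega

/-- If a region of the partition meets some row or some column in exactly `j < n`
cells, then any family of mutually orthogonal gerechte designs for this partition
has at most `n − j` members. -/
theorem stmt_10 (n j k : ℕ) (S : Fin n → Finset (Fin n × Fin n))
    (hsize : ∀ i, (S i).card = n)
    (hpart : ∀ c : Fin n × Fin n, ∃! i, c ∈ S i)
    (hj : j < n)
    (hmeet : ∃ i : Fin n,
      (∃ a : Fin n, ((S i).filter (fun c => c.1 = a)).card = j) ∨
      (∃ b : Fin n, ((S i).filter (fun c => c.2 = b)).card = j))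
    (L : Fin k → Fin n × Fin n → Fin n)
    (hger : ∀ i, IsGerechteDesign n S (L i))
    (horth : ∀ i i', i ≠ i' → OrthogonalDesigns (L i) (L i')) :
    k ≤ n - j := by
  obtain ⟨i, hcase⟩ := hmeet
  rcases hcase with ⟨a, ha⟩ | ⟨b, hb⟩
  · exact aux_row n j k (S i) (hsize i) hj a ha L
      (fun t => (hger t).1) (fun t => (hger t).2.2 i) horth
  · -- transpose
    have hswapinj : Function.Injective (Prod.swap : Fin n × Fin n → Fin n × Fin n) :=
      Prod.swap_injective
    refine aux_row n j k ((S i).image Prod.swap) ?_ hj b ?_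
      (fun t c => L t c.swap) ?_ ?_ ?_
    · rw [Finset.card_image_of_injective _ hswapinj]; exact hsize i
    · rw [Finset.filter_image]
      rw [Finset.card_image_of_injective _ hswapinj]
      simpa using hb
    · intro t a'
      intro x y hxy
      exact (hger t).2.1 a' hxy
    · intro t c hc c' hc' heq
      simp only [Finset.coe_image, Set.mem_image, Finset.mem_coe] at hc hc'
      obtain ⟨u, hu, rfl⟩ := hc
      obtain ⟨v, hv, rfl⟩ := hc'
      have : u = v := (hger t).2.2 i hu hv (by simpa using heq)
      rw [this]
    · intro t t' hne
      intro x y hxy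
      have := horth t t' hne (a₁ := x.swap) (a₂ := y.swap) (by simpa using hxy)
      exact hswapinj (by simpa using this)
end

section
/- Let n ≥ 2. Any family of mutually orthogonal sudoku squares of order n² has at most n²−n members: if L₁, …, L_k are sudoku squares of order n² that are pairwise orthogonal, then k ≤ n²−n. -/
/-- A sudoku square of order `n²`: each symbol occurs exactly once in each row,
each column, and each `n × n` box (the box of cell `(i, j)` is `(⌊i/n⌋, ⌊j/n⌋)`). -/
def IsSudokuSquare (n : ℕ) (L : Fin (n ^ 2) × Fin (n ^ 2) → Fin (n ^ 2)) : Prop :=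
  (∀ i : Fin (n ^ 2), Function.Injective (fun j => L (i, j))) ∧
  (∀ j : Fin (n ^ 2), Function.Injective (fun i => L (i, j))) ∧
  (∀ p q : Fin (n ^ 2) × Fin (n ^ 2),
    (p.1 : ℕ) / n = (q.1 : ℕ) / n → (p.2 : ℕ) / n = (q.2 : ℕ) / n → L p = L q → p = q)

/-- Two sudoku squares are orthogonal if the superimposed pair map is injective. -/
def OrthogonalSudoku {n : ℕ} (L₁ L₂ : Fin (n ^ 2) × Fin (n ^ 2) → Fin (n ^ 2)) : Prop :=
  Function.Injective (fun c => (L₁ c, L₂ c))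

/-- For `n ≥ 2`, any family of mutually orthogonal sudoku squares of order `n²`
has at most `n² − n` members. -/
theorem stmt_11 (n k : ℕ) (hn : 2 ≤ n)
    (L : Fin k → Fin (n ^ 2) × Fin (n ^ 2) → Fin (n ^ 2))
    (hsud : ∀ i, IsSudokuSquare n (L i))
    (horth : ∀ i j, i ≠ j → OrthogonalSudoku (L i) (L j)) :
    k ≤ n ^ 2 - n := by
  classical
  have hh : 1 < n ^ 2 := by nlinarith
  have hpos : 0 < n ^ 2 := by omega
  set z : Fin (n ^ 2) := ⟨0, hpos⟩ with hzdef
  set o : Fin (n ^ 2) := ⟨1, hh⟩ with hodef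
  have hoz : o ≠ z := by
    intro h
    have : (1 : ℕ) = 0 := congrArg (Fin.val) h
    omega
  -- the first row of each square is a bijection of the symbols
  have hbij : ∀ i, Function.Bijective (fun j => L i (z, j)) := fun i =>
    Finite.injective_iff_bijective.1 ((hsud i).1 z)
  let e : Fin k → (Fin (n ^ 2) ≃ Fin (n ^ 2)) := fun i => Equiv.ofBijective _ (hbij i)
  -- normalized squares: first row is the identity
  let M : Fin k → Fin (n ^ 2) × Fin (n ^ 2) → Fin (n ^ 2) := fun i c => (e i).symm (L i c)
  have hMrow : ∀ i j, M i (z, j) = j := by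
    intro i j
    show (e i).symm (L i (z, j)) = j
    have : L i (z, j) = e i j := rfl
    rw [this, Equiv.symm_apply_apply]
  have hMbox : ∀ i p q, (p.1 : ℕ) / n = (q.1 : ℕ) / n → (p.2 : ℕ) / n = (q.2 : ℕ) / n →
      M i p = M i q → p = q := by
    intro i p q h1 h2 h3
    exact (hsud i).2.2 p q h1 h2 ((e i).symm.injective h3)
  have hMorth : ∀ i j, i ≠ j → Function.Injective (fun c => (M i c, M j c)) := by
    intro i j hij c c' h
    simp only [Prod.mk.injEq, M] at h
    exact horth i j hij (Prod.ext ((e i).symm.injective h.1) ((e j).symm.injective h.2))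
  -- value at cell (1,0)
  let f : Fin k → Fin (n ^ 2) := fun i => M i (o, z)
  have hf_ge : ∀ i, n ≤ (f i : ℕ) := by
    intro i
    by_contra hlt
    push_neg at hlt
    have key : (o, z) = (z, f i) := by
      apply hMbox i
      · show (1 : ℕ) / n = (0 : ℕ) / n
        rw [Nat.div_eq_of_lt (by omega), Nat.zero_div]
      · show (0 : ℕ) / n = ((f i : ℕ)) / n
        rw [Nat.zero_div, Nat.div_eq_of_lt hlt]
      · show M i (o, z) = M i (z, f i)
        rw [hMrow]
    exact hoz (congrArg Prod.fst key)
  have hf_inj : Function.Injective f := by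
    intro i j hij
    by_contra hne
    have key : (o, z) = (z, f i) := by
      apply hMorth i j hne
      show (M i (o, z), M j (o, z)) = (M i (z, f i), M j (z, f i))
      rw [hMrow, hMrow]
      exact Prod.ext rfl hij.symm
    exact hoz (congrArg Prod.fst key)
  -- embed into Fin (n^2 - n)
  let g : Fin k → Fin (n ^ 2 - n) := fun i =>
    ⟨(f i : ℕ) - n, by have := (f i).isLt; have := hf_ge i; omega⟩
  have hg_inj : Function.Injective g := by
    intro i j h
    have h' : (f i : ℕ) - n = (f j : ℕ) - n := congrArg Fin.val h
    have := hf_ge i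
    have := hf_ge j
    exact hf_inj (Fin.ext (by omega))
  calc k = Fintype.card (Fin k) := (Fintype.card_fin k).symm
    _ ≤ Fintype.card (Fin (n ^ 2 - n)) := Fintype.card_le_of_injective g hg_inj
    _ = n ^ 2 - n := Fintype.card_fin _
end

section
/- Let r, s, t be integers with 2 ≤ r ≤ s ≤ t < 2s. If L₁, …, L_k are mutually orthogonal latin rectangles of type (r,s,t), then k·(2s−t) ≤ s²−s (equivalently, k ≤ ⌊(s²−s)/(2s−t)⌋). -/
/-- A latin rectangle of type `(r, s, t)`: an `r × s` array on `t` symbols such that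
no symbol occurs more than once in any row or column. -/
def IsLatinRectangleRST (r s t : ℕ) (L : Fin r × Fin s → Fin t) : Prop :=
  (∀ i : Fin r, Function.Injective (fun j => L (i, j))) ∧
  (∀ j : Fin s, Function.Injective (fun i => L (i, j)))

/-- Two latin rectangles of type `(r, s, t)` are orthogonal if the superimposed pair
map is injective. -/
def OrthogonalRectanglesRST {r s t : ℕ} (L₁ L₂ : Fin r × Fin s → Fin t) : Prop :=
  Function.Injective (fun c => (L₁ c, L₂ c))

/-- For `2 ≤ r ≤ s ≤ t < 2s`, any `k` mutually orthogonal latin rectangles of type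
`(r, s, t)` satisfy `k·(2s − t) ≤ s² − s`. -/
theorem stmt_13 (r s t k : ℕ) (hr : 2 ≤ r) (hrs : r ≤ s) (hst : s ≤ t)
    (ht : t < 2 * s)
    (L : Fin k → Fin r × Fin s → Fin t)
    (hlatin : ∀ i, IsLatinRectangleRST r s t (L i))
    (horth : ∀ i j, i ≠ j → OrthogonalRectanglesRST (L i) (L j)) :
    k * (2 * s - t) ≤ s ^ 2 - s := by
  classical
  set i0 : Fin r := ⟨0, by omega⟩ with hi0
  set i1 : Fin r := ⟨1, by omega⟩ with hi1
  have hi01 : i0 ≠ i1 := by simp [hi0, hi1, Fin.ext_iff]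
  set P : Fin k → Finset (Fin s × Fin s) :=
    fun m => (Finset.univ : Finset (Fin s)).offDiag.filter
      (fun p => L m (i0, p.1) = L m (i1, p.2)) with hP
  -- cardinality lower bound
  have hcard : ∀ m, 2 * s - t ≤ (P m).card := by
    intro m
    set u : Fin s → Fin t := fun j => L m (i0, j) with hu
    set v : Fin s → Fin t := fun j => L m (i1, j) with hv
    have hui : Function.Injective u := (hlatin m).1 i0
    have hvi : Function.Injective v := (hlatin m).1 i1
    have hs0 : 0 < s := by omega
    have : Nonempty (Fin s) := ⟨⟨0, hs0⟩⟩
    set A : Finset (Fin t) := Finset.univ.image u with hA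
    set B : Finset (Fin t) := Finset.univ.image v with hB
    have hAc : A.card = s := by
      rw [hA, Finset.card_image_of_injective _ hui, Finset.card_univ, Fintype.card_fin]
    have hBc : B.card = s := by
      rw [hB, Finset.card_image_of_injective _ hvi, Finset.card_univ, Fintype.card_fin]
    have hunion : (A ∪ B).card ≤ t := by
      calc (A ∪ B).card ≤ (Finset.univ : Finset (Fin t)).card :=
            Finset.card_le_card (Finset.subset_univ _)
        _ = t := by simp
    have hinter : 2 * s - t ≤ (A ∩ B).card := by
      have := Finset.card_inter_add_card_union A B
      omega
    -- inject A ∩ B into P m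
    set f : Fin t → Fin s := Function.invFun u with hf
    set g : Fin t → Fin s := Function.invFun v with hg
    have hfu : ∀ σ ∈ A, u (f σ) = σ := by
      intro σ hσ
      rw [hA, Finset.mem_image] at hσ
      obtain ⟨j, _, hj⟩ := hσ
      rw [← hj, hf, Function.leftInverse_invFun hui j]
    have hgv : ∀ σ ∈ B, v (g σ) = σ := by
      intro σ hσ
      rw [hB, Finset.mem_image] at hσ
      obtain ⟨j, _, hj⟩ := hσ
      rw [← hj, hg, Function.leftInverse_invFun hvi j]
    have hmap : ∀ σ ∈ A ∩ B, (f σ, g σ) ∈ P m := by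
      intro σ hσ
      rw [Finset.mem_inter] at hσ
      have h1 := hfu σ hσ.1
      have h2 := hgv σ hσ.2
      have hne : f σ ≠ g σ := by
        intro h
        have h1' : L m (i0, f σ) = σ := h1
        have h2' : L m (i1, g σ) = σ := h2
        have : L m (i0, f σ) = L m (i1, f σ) := by
          rw [h1', h]; exact h2'.symm
        exact hi01 ((hlatin m).2 (f σ) this)
      rw [hP]
      simp only [Finset.mem_filter, Finset.mem_offDiag, Finset.mem_univ, true_and]
      refine ⟨hne, ?_⟩
      have h1' : L m (i0, f σ) = σ := h1
      have h2' : L m (i1, g σ) = σ := h2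
      rw [h1', h2']
    have hinj : Set.InjOn (fun σ => (f σ, g σ)) (A ∩ B : Finset (Fin t)) := by
      intro σ1 h1 σ2 h2 heq
      rw [Finset.mem_coe, Finset.mem_inter] at h1 h2
      have e1 : f σ1 = f σ2 := congrArg Prod.fst heq
      calc σ1 = u (f σ1) := (hfu σ1 h1.1).symm
        _ = u (f σ2) := by rw [e1]
        _ = σ2 := hfu σ2 h2.1
    calc 2 * s - t ≤ (A ∩ B).card := hinter
      _ ≤ (P m).card := Finset.card_le_card_of_injOn _ hmap hinj
  -- disjointness
  have hdisj : ∀ m ∈ (Finset.univ : Finset (Fin k)), ∀ m' ∈ Finset.univ, m ≠ m' →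
      Disjoint (P m) (P m') := by
    intro m _ m' _ hmm
    rw [Finset.disjoint_left]
    intro p hp hp'
    rw [hP, Finset.mem_filter, Finset.mem_offDiag] at hp hp'
    have h := horth m m' hmm
    have : ((L m (i0, p.1), L m' (i0, p.1)) : Fin t × Fin t)
        = (L m (i1, p.2), L m' (i1, p.2)) := by
      rw [hp.2, hp'.2]
    have := h this
    have : i0 = i1 := congrArg Prod.fst this
    exact hi01 this
  calc k * (2 * s - t) = ∑ _m : Fin k, (2 * s - t) := by
        simp [Finset.sum_const, Finset.card_univ, mul_comm]
    _ ≤ ∑ m : Fin k, (P m).card := Finset.sum_le_sum (fun m _ => hcard m)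
    _ = (Finset.univ.biUnion P).card := (Finset.card_biUnion hdisj).symm
    _ ≤ (Finset.univ : Finset (Fin s)).offDiag.card := by
        apply Finset.card_le_card
        intro p hp
        rw [Finset.mem_biUnion] at hp
        obtain ⟨m, _, hm⟩ := hp
        rw [hP] at hm
        exact (Finset.mem_filter.mp hm).1
    _ = s ^ 2 - s := by
        rw [Finset.offDiag_card]
        simp [Finset.card_univ, sq]
end

section
/- Let G be a simple graph with exactly n² vertices, and suppose there exist k mutually orthogonal n-colorings of G with k ≥ 2. Then there exist k−2 mutually orthogonal latin squares of order n. -/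
/-- If a graph on `n²` vertices has `k ≥ 2` mutually orthogonal `n`-colorings, then
there exist `k − 2` mutually orthogonal latin squares of order `n`. -/
theorem stmt_15 {V : Type*} [Fintype V] (G : SimpleGraph V) (n k : ℕ)
    (hcard : Fintype.card V = n ^ 2) (hk : 2 ≤ k)
    (C : Fin k → V → Fin n)
    (hproper : ∀ i, IsProperColoring G n (C i))
    (horth : ∀ i j, i ≠ j → OrthogonalColorings (C i) (C j)) :
    ∃ L : Fin (k - 2) → Fin n × Fin n → Fin n,
      (∀ i, IsLatinSquare n (L i)) ∧
      (∀ i j, i ≠ j → OrthogonalLatinSquares (L i) (L j)) := by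

  classical
  have h0 : (0 : ℕ) < k := by omega
  have h1 : (1 : ℕ) < k := by omega
  set φ : V → Fin n × Fin n := fun v => (C ⟨0, h0⟩ v, C ⟨1, h1⟩ v) with hφ
  have hinj : Function.Injective φ := by
    intro u v huv
    by_contra hne
    have h01 : (⟨0, h0⟩ : Fin k) ≠ ⟨1, h1⟩ := by simp
    exact horth _ _ h01 u v hne (congrArg Prod.fst huv) (congrArg Prod.snd huv)
  have hbij : Function.Bijective φ := by
    rw [Fintype.bijective_iff_injective_and_card]
    refine ⟨hinj, ?_⟩
    simp [hcard, sq]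
  let e : V ≃ Fin n × Fin n := Equiv.ofBijective φ hbij
  have he : ∀ c, φ (e.symm c) = c := fun c => e.apply_symm_apply c
  refine ⟨fun i c => C ⟨i.val + 2, by omega⟩ (e.symm c), ?_, ?_⟩
  · intro i
    constructor
    · intro r j j' h
      by_contra hne
      have hvne : e.symm (r, j) ≠ e.symm (r, j') := by
        intro heq; exact hne (by simpa using congrArg Prod.snd (congrArg e heq))
      have hidx : (⟨i.val + 2, by omega⟩ : Fin k) ≠ ⟨0, h0⟩ := by
        simp [Fin.ext_iff]
      have ha : C ⟨0, h0⟩ (e.symm (r, j)) = r := congrArg Prod.fst (he (r, j))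
      have hb : C ⟨0, h0⟩ (e.symm (r, j')) = r := congrArg Prod.fst (he (r, j'))
      have hC0 : C ⟨0, h0⟩ (e.symm (r, j)) = C ⟨0, h0⟩ (e.symm (r, j')) := ha.trans hb.symm
      exact horth _ _ hidx _ _ hvne h hC0
    · intro cidx r r' h
      by_contra hne
      have hvne : e.symm (r, cidx) ≠ e.symm (r', cidx) := by
        intro heq; exact hne (by simpa using congrArg Prod.fst (congrArg e heq))
      have hidx : (⟨i.val + 2, by omega⟩ : Fin k) ≠ ⟨1, h1⟩ := by
        simp [Fin.ext_iff]
      have ha : C ⟨1, h1⟩ (e.symm (r, cidx)) = cidx := congrArg Prod.snd (he (r, cidx))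
      have hb : C ⟨1, h1⟩ (e.symm (r', cidx)) = cidx := congrArg Prod.snd (he (r', cidx))
      have hC1 : C ⟨1, h1⟩ (e.symm (r, cidx)) = C ⟨1, h1⟩ (e.symm (r', cidx)) := ha.trans hb.symm
      exact horth _ _ hidx _ _ hvne h hC1
  · intro i j hij c c' h
    by_contra hne
    have hvne : e.symm c ≠ e.symm c' := fun heq => hne (by simpa using congrArg e heq)
    have hidx : (⟨i.val + 2, by omega⟩ : Fin k) ≠ ⟨j.val + 2, by omega⟩ := by
      simp only [ne_eq, Fin.mk.injEq]
      intro hc; exact hij (Fin.ext (by omega))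
    exact horth _ _ hidx _ _ hvne (congrArg Prod.fst h) (congrArg Prod.snd h)
end

section
/- Let G be a simple graph with exactly n² vertices, and suppose there exist k mutually orthogonal n-colorings of G with k ≥ 3. Then there exist k−3 mutually orthogonal single diagonal latin squares of order n. -/
/-- If a graph on `n²` vertices has `k ≥ 3` mutually orthogonal `n`-colorings, then
there exist `k − 3` mutually orthogonal single diagonal latin squares of order `n`. -/
theorem stmt_16 {V : Type*} [Fintype V] (G : SimpleGraph V) (n k : ℕ)
    (hcard : Fintype.card V = n ^ 2) (hk : 3 ≤ k)
    (C : Fin k → V → Fin n)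
    (hproper : ∀ i, IsProperColoring G n (C i))
    (horth : ∀ i j, i ≠ j → OrthogonalColorings (C i) (C j)) :
    ∃ L : Fin (k - 3) → Fin n × Fin n → Fin n,
      (∀ i, IsSingleDiagonalLatinSquare n (L i)) ∧
      (∀ i j, i ≠ j → OrthogonalLatinSquares (L i) (L j)) := by
  rcases Nat.eq_zero_or_pos n with hn | hn
  · subst hn
    refine ⟨fun i p => p.1, fun i => ⟨⟨fun r j => j.elim0, fun c i => i.elim0⟩,
      fun i => i.elim0⟩, fun i j _ p => p.1.elim0⟩
  have hn2 : Fintype.card (Fin n × Fin n) = Fintype.card V := by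
    simp [hcard, sq]
  -- pair maps from two distinct colorings are bijective
  have key : ∀ a b : Fin k, a ≠ b → Function.Bijective (fun v => (C a v, C b v)) := by
    intro a b hab
    refine (Fintype.bijective_iff_injective_and_card _).2 ⟨?_, hn2.symm⟩
    intro u v h
    by_contra hne
    simp only [Prod.mk.injEq] at h
    exact horth a b hab u v hne h.1 h.2
  set a0 : Fin k := ⟨0, by omega⟩
  set a1 : Fin k := ⟨1, by omega⟩
  set a2 : Fin k := ⟨2, by omega⟩
  have h02 : a0 ≠ a2 := by simp [a0, a2, Fin.ext_iff]
  have h21 : a2 ≠ a1 := by simp [a1, a2, Fin.ext_iff]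
  have h01 : a0 ≠ a1 := by simp [a0, a1, Fin.ext_iff]
  set Ψ : V ≃ Fin n × Fin n := Equiv.ofBijective _ (key a0 a2 h02) with hΨ
  set t : Fin n → V := fun x => Ψ.symm (x, ⟨0, hn⟩) with ht
  have ht0 : ∀ x, C a0 (t x) = x ∧ C a2 (t x) = ⟨0, hn⟩ := by
    intro x
    have := Ψ.apply_symm_apply (x, ⟨0, hn⟩)
    rw [hΨ] at this
    exact Prod.mk.injEq .. ▸ this
  have τinj : Function.Injective (fun x => C a1 (t x)) := by
    intro x y h
    by_contra hxy
    have htne : t x ≠ t y := by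
      intro he
      exact hxy (((ht0 x).1.symm.trans (by rw [he])).trans (ht0 y).1)
    exact horth a2 a1 h21 (t x) (t y) htne ((ht0 x).2.trans (ht0 y).2.symm) h
  set τ : Fin n ≃ Fin n := Equiv.ofBijective _
    ((Fintype.bijective_iff_injective_and_card _).2 ⟨τinj, rfl⟩) with hτ
  have Φbij : Function.Bijective (fun v => (C a0 v, τ.symm (C a1 v))) := by
    refine (Fintype.bijective_iff_injective_and_card _).2 ⟨?_, hn2.symm⟩
    intro u v h
    by_contra hne
    simp only [Prod.mk.injEq] at h
    exact horth a0 a1 h01 u v hne h.1 (τ.symm.injective h.2)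
  set Φ : V ≃ Fin n × Fin n := Equiv.ofBijective _ Φbij with hΦ
  have hΦ0 : ∀ p : Fin n × Fin n, C a0 (Φ.symm p) = p.1 ∧ C a1 (Φ.symm p) = τ p.2 := by
    intro p
    have := Φ.apply_symm_apply p
    rw [hΦ] at this
    have h1 : C a0 (Φ.symm p) = p.1 := congrArg Prod.fst this
    have h2 : τ.symm (C a1 (Φ.symm p)) = p.2 := congrArg Prod.snd this
    exact ⟨h1, by rw [← h2, Equiv.apply_symm_apply]⟩
  have hdiag : ∀ x : Fin n, Φ.symm (x, x) = t x := by
    intro x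
    have : Φ (t x) = (x, x) := by
      rw [hΦ]
      simp only [Equiv.ofBijective_apply]
      rw [(ht0 x).1]
      have : τ x = C a1 (t x) := rfl
      rw [← this, Equiv.symm_apply_apply]
    rw [← this, Equiv.symm_apply_apply]
  set idx : Fin (k - 3) → Fin k := fun i => ⟨i + 3, by omega⟩ with hidx
  have hidx0 : ∀ i, idx i ≠ a0 := by intro i; simp [hidx, a0, Fin.ext_iff]
  have hidx1 : ∀ i, idx i ≠ a1 := by intro i; simp [hidx, a1, Fin.ext_iff]
  have hidx2 : ∀ i, idx i ≠ a2 := by intro i; simp [hidx, a2, Fin.ext_iff]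
  refine ⟨fun i p => C (idx i) (Φ.symm p), ?_, ?_⟩
  · intro i
    refine ⟨⟨?_, ?_⟩, ?_⟩
    · intro x j j' h
      simp only at h
      have hv : Φ.symm (x, j) = Φ.symm (x, j') := by
        by_contra hne
        exact horth a0 (idx i) (hidx0 i).symm _ _ hne
          ((hΦ0 (x, j)).1.trans (hΦ0 (x, j')).1.symm) h
      exact (Prod.mk.injEq .. ▸ Φ.symm.injective hv).2
    · intro j x x' h
      simp only at h
      have hv : Φ.symm (x, j) = Φ.symm (x', j) := by
        by_contra hne
        refine horth a1 (idx i) (hidx1 i).symm _ _ hne ?_ h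
        exact (hΦ0 (x, j)).2.trans (hΦ0 (x', j)).2.symm
      exact (Prod.mk.injEq .. ▸ Φ.symm.injective hv).1
    · intro x y h
      simp only [hdiag] at h
      have hv : t x = t y := by
        by_contra hne
        exact horth a2 (idx i) (hidx2 i).symm _ _ hne
          ((ht0 x).2.trans (ht0 y).2.symm) h
      exact (ht0 x).1.symm.trans ((congrArg (C a0) hv).trans (ht0 y).1)
  · intro i j hij p q h
    simp only [Prod.mk.injEq] at h
    have hij' : idx i ≠ idx j := by
      simp only [hidx, ne_eq, Fin.mk.injEq]
      exact fun he => hij (Fin.ext (by omega))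
    have hv : Φ.symm p = Φ.symm q := by
      by_contra hne
      exact horth (idx i) (idx j) hij' _ _ hne h.1 h.2
    exact Φ.symm.injective hv
end

section
/- (Or-product theorem.) Let G and H be simple graphs on finite vertex sets and let m, n, k be positive integers. Define the or-product G ⊙ H to be the simple graph on V(G) × V(H) in which (u,v) and (u',v') are adjacent if and only if u is adjacent to u' in G or v is adjacent to v' in H. If there exist k mutually orthogonal m-colorings of G and k mutually orthogonal n-colorings of H, then for every subgraph S of G ⊙ H there exist k mutually orthogonal (m·n)-colorings of S. In particular, given mutually orthogonal m-colorings A₁, …, A_k of G and mutually orthogonal n-colorings B₁, …, B_k of H, the colorings (u,v) ↦ (A_i(u), B_i(v)) (with colors in Fin m × Fin n ≃ Fin (m·n)) are proper colorings of G ⊙ H that are pairwise orthogonal. -/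
/-- The or-product of graphs `G` and `H`: vertices `(u, v)` and `(u', v')` are
adjacent iff `u ∼ u'` in `G` or `v ∼ v'` in `H`. -/
def orProduct {α β : Type*} (G : SimpleGraph α) (H : SimpleGraph β) :
    SimpleGraph (α × β) where
  Adj p q := G.Adj p.1 q.1 ∨ H.Adj p.2 q.2
  symm := by
    constructor
    rintro p q (h | h)
    · exact Or.inl h.symm
    · exact Or.inr h.symm
  loopless := by
    constructor
    rintro p (h | h)
    · exact G.irrefl h
    · exact H.irrefl h

def prodColoring {α β : Type*} {m n : ℕ} (A : α → Fin m) (B : β → Fin n) :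
    α × β → Fin (m * n) :=
  fun p => finProdFinEquiv (A p.1, B p.2)

section prodColoring

variable {α β : Type*} {m n : ℕ}

theorem prodColoring_eq_iff {A : α → Fin m} {B : β → Fin n} {p q : α × β} :
    prodColoring A B p = prodColoring A B q ↔ A p.1 = A q.1 ∧ B p.2 = B q.2 :=
  finProdFinEquiv.injective.eq_iff.trans Prod.mk_inj

theorem IsProperColoring.prodColoring_orProduct {G : SimpleGraph α} {H : SimpleGraph β}
    {A : α → Fin m} {B : β → Fin n} (hA : IsProperColoring G m A)
    (hB : IsProperColoring H n B) :
    IsProperColoring (orProduct G H) (m * n) (prodColoring A B) := by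
  rintro p q (hG | hH) hpq <;> rw [prodColoring_eq_iff] at hpq
  · exact hA _ _ hG hpq.1
  · exact hB _ _ hH hpq.2

theorem OrthogonalColorings.prodColoring {A₁ A₂ : α → Fin m} {B₁ B₂ : β → Fin n}
    (hA : OrthogonalColorings A₁ A₂) (hB : OrthogonalColorings B₁ B₂) :
    OrthogonalColorings (prodColoring A₁ B₁) (prodColoring A₂ B₂) := by
  intro p q hpq h₁ h₂
  rw [prodColoring_eq_iff] at h₁ h₂
  by_cases hfst : p.1 = q.1
  · exact hB _ _ (fun hsnd => hpq (Prod.ext hfst hsnd)) h₁.2 h₂.2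
  · exact hA _ _ hfst h₁.1 h₂.1

end prodColoring

theorem IsProperColoring.mono {V : Type*} {S G : SimpleGraph V} {n : ℕ} {C : V → Fin n}
    (hC : IsProperColoring G n C) (hSG : S ≤ G) : IsProperColoring S n C :=
  fun u v huv => hC u v (hSG huv)

theorem stmt_17_general {α β : Type*}
    (G : SimpleGraph α) (H : SimpleGraph β) (m n k : ℕ)
    (A : Fin k → α → Fin m) (B : Fin k → β → Fin n)
    (hA : ∀ i, IsProperColoring G m (A i))
    (hAorth : ∀ i j, i ≠ j → OrthogonalColorings (A i) (A j))
    (hB : ∀ i, IsProperColoring H n (B i))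
    (hBorth : ∀ i j, i ≠ j → OrthogonalColorings (B i) (B j)) :
    (∀ S : SimpleGraph (α × β), S ≤ orProduct G H →
      ∃ D : Fin k → α × β → Fin (m * n),
        (∀ i, IsProperColoring S (m * n) (D i)) ∧
        (∀ i j, i ≠ j → OrthogonalColorings (D i) (D j))) ∧
    ((∀ i, IsProperColoring (orProduct G H) (m * n)
        (fun p => finProdFinEquiv (A i p.1, B i p.2))) ∧
      (∀ i j, i ≠ j → OrthogonalColorings
        (fun p : α × β => finProdFinEquiv (A i p.1, B i p.2))
        (fun p : α × β => finProdFinEquiv (A j p.1, B j p.2)))) := by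
  have hproper : ∀ i, IsProperColoring (orProduct G H) (m * n) (prodColoring (A i) (B i)) :=
    fun i => (hA i).prodColoring_orProduct (hB i)
  have horth : ∀ i j, i ≠ j →
      OrthogonalColorings (prodColoring (A i) (B i)) (prodColoring (A j) (B j)) :=
    fun i j hij => (hAorth i j hij).prodColoring (hBorth i j hij)
  exact ⟨fun S hS => ⟨fun i => prodColoring (A i) (B i), fun i => (hproper i).mono hS, horth⟩,
    hproper, horth⟩

/-- Or-product theorem: if `G` has `k` mutually orthogonal `m`-colorings and `H` has
`k` mutually orthogonal `n`-colorings, then every subgraph `S` of `G ⊙ H` has `k`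
mutually orthogonal `(m·n)`-colorings; moreover the explicit product colorings
`(u, v) ↦ (Aᵢ u, Bᵢ v)` are proper colorings of `G ⊙ H` that are pairwise orthogonal. -/
theorem stmt_17 {α β : Type*} [Fintype α] [Fintype β]
    (G : SimpleGraph α) (H : SimpleGraph β) (m n k : ℕ)
    (hm : 0 < m) (hn : 0 < n) (hk : 0 < k)
    (A : Fin k → α → Fin m) (B : Fin k → β → Fin n)
    (hA : ∀ i, IsProperColoring G m (A i))
    (hAorth : ∀ i j, i ≠ j → OrthogonalColorings (A i) (A j))
    (hB : ∀ i, IsProperColoring H n (B i))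
    (hBorth : ∀ i j, i ≠ j → OrthogonalColorings (B i) (B j)) :
    (∀ S : SimpleGraph (α × β), S ≤ orProduct G H →
      ∃ D : Fin k → α × β → Fin (m * n),
        (∀ i, IsProperColoring S (m * n) (D i)) ∧
        (∀ i j, i ≠ j → OrthogonalColorings (D i) (D j))) ∧
    ((∀ i, IsProperColoring (orProduct G H) (m * n)
        (fun p => finProdFinEquiv (A i p.1, B i p.2))) ∧
      (∀ i j, i ≠ j → OrthogonalColorings
        (fun p : α × β => finProdFinEquiv (A i p.1, B i p.2))
        (fun p : α × β => finProdFinEquiv (A j p.1, B j p.2)))) :=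
  stmt_17_general G H m n k A B hA hAorth hB hBorth
end

section
/- If there exist k mutually orthogonal latin squares of order m and k mutually orthogonal latin squares of order n, then there exist k mutually orthogonal latin squares of order m·n. (In the standard notation, N(mn) ≥ min{N(m), N(n)}.) -/
/-- If there are `k` MOLS of order `m` and `k` MOLS of order `n`, then there are
`k` MOLS of order `m·n` (so `N(mn) ≥ min{N(m), N(n)}`). -/
theorem stmt_18 (m n k : ℕ)
    (A : Fin k → Fin m × Fin m → Fin m)
    (hA : ∀ i, IsLatinSquare m (A i))
    (hAorth : ∀ i j, i ≠ j → OrthogonalLatinSquares (A i) (A j))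
    (B : Fin k → Fin n × Fin n → Fin n)
    (hB : ∀ i, IsLatinSquare n (B i))
    (hBorth : ∀ i j, i ≠ j → OrthogonalLatinSquares (B i) (B j)) :
    ∃ L : Fin k → Fin (m * n) × Fin (m * n) → Fin (m * n),
      (∀ i, IsLatinSquare (m * n) (L i)) ∧
      (∀ i j, i ≠ j → OrthogonalLatinSquares (L i) (L j)) := by
  set e : Fin m × Fin n ≃ Fin (m * n) := finProdFinEquiv with he
  refine ⟨fun i c => e (A i ((e.symm c.1).1, (e.symm c.2).1),
    B i ((e.symm c.1).2, (e.symm c.2).2)), ?_, ?_⟩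
  · intro i
    constructor
    · intro p j j' h
      simp only at h
      have h2 := e.injective h
      have hAe := (hA i).1 (e.symm p).1 (Prod.ext_iff.mp h2).1
      have hBe := (hB i).1 (e.symm p).2 (Prod.ext_iff.mp h2).2
      have : e.symm j = e.symm j' := Prod.ext hAe hBe
      exact e.symm.injective this
    · intro q j j' h
      simp only at h
      have h2 := e.injective h
      have hAe := (hA i).2 (e.symm q).1 (Prod.ext_iff.mp h2).1
      have hBe := (hB i).2 (e.symm q).2 (Prod.ext_iff.mp h2).2
      have : e.symm j = e.symm j' := Prod.ext hAe hBe
      exact e.symm.injective this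
  · intro i j hij c c' h
    simp only [Prod.ext_iff] at h
    obtain ⟨h1, h2⟩ := h
    have h1' := e.injective h1
    have h2' := e.injective h2
    rw [Prod.ext_iff] at h1' h2'
    have hAo := hAorth i j hij
      (show (fun c => (A i c, A j c)) ((e.symm c.1).1, (e.symm c.2).1)
        = (fun c => (A i c, A j c)) ((e.symm c'.1).1, (e.symm c'.2).1) from
        Prod.ext h1'.1 h2'.1)
    have hBo := hBorth i j hij
      (show (fun c => (B i c, B j c)) ((e.symm c.1).2, (e.symm c.2).2)
        = (fun c => (B i c, B j c)) ((e.symm c'.1).2, (e.symm c'.2).2) from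
        Prod.ext h1'.2 h2'.2)
    rw [Prod.ext_iff] at hAo hBo
    have hc1 : e.symm c.1 = e.symm c'.1 := Prod.ext hAo.1 hBo.1
    have hc2 : e.symm c.2 = e.symm c'.2 := Prod.ext hAo.2 hBo.2
    exact Prod.ext (e.symm.injective hc1) (e.symm.injective hc2)
end

section
/- (Lower bound on the k-orthogonal chromatic number via average degree.) Let G be a simple graph with v vertices and e edges. If there exist k mutually orthogonal n-colorings of G, then k·v² ≤ n·(v·(v−1) − 2e + k·v). (Equivalently, with average degree D = 2e/v, every n for which G has k mutually orthogonal n-colorings satisfies n ≥ ⌈v·k/(v−D−1+k)⌉, so Oχ_k(G) ≥ ⌈v·k/(v−D−1+k)⌉.) -/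
open Finset

/-- Lower bound for the `k`-orthogonal chromatic number via the average degree:
if `G` has `v` vertices, `e` edges, and `k` mutually orthogonal `n`-colorings,
then `k·v² ≤ n·(v·(v − 1) − 2e + k·v)`. -/
theorem stmt_19 {V : Type*} [Fintype V] (G : SimpleGraph V) [Fintype G.edgeSet]
    (v e n k : ℕ) (hv : v = Fintype.card V) (he : e = G.edgeFinset.card)
    (C : Fin k → V → Fin n)
    (hproper : ∀ i, IsProperColoring G n (C i))
    (horth : ∀ i j, i ≠ j → OrthogonalColorings (C i) (C j)) :
    (k : ℤ) * (v : ℤ) ^ 2 ≤ (n : ℤ) * ((v : ℤ) * ((v : ℤ) - 1) - 2 * e + k * v) := by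
  classical
  subst hv he
  set v := Fintype.card V with hvdef
  set S : Fin k → Finset (V × V) :=
    fun i => univ.filter (fun p : V × V => p.1 ≠ p.2 ∧ C i p.1 = C i p.2) with hS
  set N : Finset (V × V) :=
    univ.filter (fun p : V × V => p.1 ≠ p.2 ∧ ¬ G.Adj p.1 p.2) with hN
  set A : Finset (V × V) := univ.filter (fun p : V × V => p.1 ≠ p.2) with hA
  set Nadj : Finset (V × V) := univ.filter (fun p : V × V => G.Adj p.1 p.2) with hNadj
  -- diagonal card
  have hdiag : ∀ (P : V × V → Prop) [DecidablePred P], (∀ x, P (x, x)) →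
      (univ.filter (fun p : V × V => P p ∧ p.1 = p.2)).card = v := by
    intro P _ hP
    rw [hvdef, ← card_univ]
    exact card_bij' (fun p _ => p.1) (fun x _ => (x, x)) (fun p _ => mem_univ _)
      (fun x _ => by simp [hP x]) (fun p hp => Prod.ext rfl (mem_filter.1 hp).2.2)
      (fun x _ => rfl)
  -- Step 1 : per-coloring Cauchy-Schwarz bound
  have step1 : ∀ i, (v : ℤ) ^ 2 ≤ (n : ℤ) * ((S i).card + v) := by
    intro i
    set s : Fin n → Finset V := fun c => univ.filter (fun x => C i x = c) with hs
    have hsum : ∑ c, (s c).card = v := by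
      rw [hvdef, ← card_univ]
      exact (card_eq_sum_card_fiberwise (fun x _ => mem_univ (C i x))).symm
    set T : Finset (V × V) := univ.filter (fun p : V × V => C i p.1 = C i p.2) with hT
    have hsq : T.card = ∑ c, (s c).card ^ 2 := by
      rw [card_eq_sum_card_fiberwise (f := fun p => C i p.1) (t := univ)
        (fun p _ => mem_univ _)]
      refine Finset.sum_congr rfl fun c _ => ?_
      have : T.filter (fun p => C i p.1 = c) = (s c) ×ˢ (s c) := by
        ext p
        simp only [hT, hs, mem_filter, mem_product, mem_univ, true_and, mem_filter]
        constructor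
        · rintro ⟨h1, h2⟩; exact ⟨h2, h1 ▸ h2⟩
        · rintro ⟨h1, h2⟩; exact ⟨h1.trans h2.symm, h1⟩
      rw [this, card_product, sq]
    have hTsplit : (S i).card + v = T.card := by
      have key := card_filter_add_card_filter_not (s := T)
        (p := fun p : V × V => p.1 ≠ p.2)
      have e1 : T.filter (fun p => p.1 ≠ p.2) = S i := by
        rw [hT, filter_filter, hS]
        apply filter_congr
        intro p _
        tauto
      have e2 : (T.filter (fun p => ¬ p.1 ≠ p.2)).card = v := by
        rw [hT, filter_filter]
        rw [← hdiag (fun p : V × V => C i p.1 = C i p.2) (fun x => rfl)]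
        congr 1
        apply filter_congr
        intro p _
        simp only [mem_univ, not_not, true_and]
      rw [← key, e1, e2]
    have hcs := sq_sum_le_card_mul_sum_sq (s := (univ : Finset (Fin n)))
      (f := fun c => ((s c).card : ℤ))
    simp only [card_univ, Fintype.card_fin] at hcs
    calc (v : ℤ) ^ 2 = (∑ c, ((s c).card : ℤ)) ^ 2 := by
          rw [← Nat.cast_sum, hsum]
      _ ≤ (n : ℤ) * ∑ c, ((s c).card : ℤ) ^ 2 := hcs
      _ = (n : ℤ) * ((S i).card + v) := by
          rw [← hTsplit] at hsq
          have : ((S i).card + v : ℤ) = ∑ c, ((s c).card : ℤ) ^ 2 := by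
            exact_mod_cast congrArg (Nat.cast (R := ℤ)) hsq
          rw [this]
  -- Step 2 : the S i are pairwise disjoint subsets of N
  have hsub : ∀ i, S i ⊆ N := by
    intro i p hp
    simp only [hS, mem_filter, mem_univ, true_and] at hp
    simp only [hN, mem_filter, mem_univ, true_and]
    exact ⟨hp.1, fun hadj => hproper i _ _ hadj hp.2⟩
  have hdisj : ∀ i ∈ (univ : Finset (Fin k)), ∀ j ∈ univ, i ≠ j →
      Disjoint (S i) (S j) := by
    intro i _ j _ hij
    rw [Finset.disjoint_left]
    intro p hpi hpj
    simp only [hS, mem_filter, mem_univ, true_and] at hpi hpj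
    exact horth i j hij p.1 p.2 hpi.1 hpi.2 hpj.2
  have hsumS : ∑ i, (S i).card ≤ N.card := by
    rw [← Finset.card_biUnion hdisj]
    exact card_le_card (biUnion_subset.2 fun i _ => hsub i)
  -- Step 3 : N.card = v*(v-1) - 2e over ℤ
  have hAsplit : Nadj.card + N.card = A.card := by
    have key := card_filter_add_card_filter_not (s := A)
      (p := fun p : V × V => G.Adj p.1 p.2)
    have e1 : A.filter (fun p => G.Adj p.1 p.2) = Nadj := by
      rw [hA, filter_filter, hNadj]
      apply filter_congr
      intro p _
      exact ⟨fun h => h.2, fun h => ⟨h.ne, h⟩⟩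
    have e2 : A.filter (fun p => ¬ G.Adj p.1 p.2) = N := by
      rw [hA, filter_filter, hN]
    rw [← key, e1, e2]
  have hAcard : v + A.card = v * v := by
    have key := card_filter_add_card_filter_not (s := (univ : Finset (V × V)))
      (p := fun p : V × V => p.1 = p.2)
    rw [card_univ, Fintype.card_prod, ← hvdef] at key
    have e1 : (univ.filter (fun p : V × V => p.1 = p.2)).card = v := by
      rw [← hdiag (fun _ => True) (fun _ => trivial)]
      congr 1
      apply filter_congr
      intro p _
      simp
    have e2 : univ.filter (fun p : V × V => ¬ p.1 = p.2) = A := by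
      rw [hA]
    rw [← key, e1, e2]
  have h2e : 2 * G.edgeFinset.card = Nadj.card := by
    have h := @SimpleGraph.two_mul_card_edgeFinset V G _ (Classical.decRel _)
    rw [hNadj]
    convert h using 2
    apply congrArg Finset.card
    ext x
    simp [SimpleGraph.mem_edgeFinset]
  have hNint : (N.card : ℤ) = (v : ℤ) * ((v : ℤ) - 1) - 2 * G.edgeFinset.card := by
    have h1 : (Nadj.card : ℤ) + N.card = A.card := by exact_mod_cast hAsplit
    have h2 : (v : ℤ) + A.card = v * v := by exact_mod_cast hAcard
    have h3 : (2 : ℤ) * G.edgeFinset.card = Nadj.card := by exact_mod_cast h2e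
    linarith [h1, h2, h3]
  -- Assemble
  calc (k : ℤ) * (v : ℤ) ^ 2 = ∑ _i : Fin k, (v : ℤ) ^ 2 := by
        rw [Finset.sum_const, card_univ, Fintype.card_fin, nsmul_eq_mul]
    _ ≤ ∑ i : Fin k, (n : ℤ) * ((S i).card + v) := Finset.sum_le_sum fun i _ => step1 i
    _ = (n : ℤ) * ((∑ i, ((S i).card : ℤ)) + k * v) := by
        rw [← Finset.mul_sum, Finset.sum_add_distrib, Finset.sum_const, card_univ,
          Fintype.card_fin, nsmul_eq_mul]
    _ ≤ (n : ℤ) * ((N.card : ℤ) + k * v) := by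
        have : (∑ i, ((S i).card : ℤ)) ≤ (N.card : ℤ) := by
          rw [← Nat.cast_sum]; exact_mod_cast hsumS
        have hn : (0 : ℤ) ≤ n := Int.natCast_nonneg n
        nlinarith
    _ = (n : ℤ) * ((v : ℤ) * ((v : ℤ) - 1) - 2 * G.edgeFinset.card + k * v) := by
        rw [hNint]
end
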